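/- arXiv:2201.12697 — 9 statements merged into one kernel-verified Lean document; each statement's English description precedes it below -/
import Mathlib

section
/- Let W = (W_s)_{s≥1} be a sequence of nonnegative reals with W_1 = 1. Then the following are equivalent: (i) W is log-convex, i.e. W_s² ≤ W_{s−1}W_{s+1} for all s ≥ 2; (ii) for every n ≥ 1, every 1 ≤ k ≤ n, and every pair of integer partitions 𝐧 = (n_1,…,n_k) and 𝐧' = (n'_1,…,n'_k) of n into k parts with 𝐧 ≺ 𝐧', one has ∏_{j=1}^k W_{n_j} ≥ ∏_{j=1}^k W_{n'_j}. (This is the statement that a Gibbs partition with EPPF p(n_1,…,n_k) = V_{n,k}∏_j W_{n_j} is balance-averse if and only if W is log-convex.) -/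
/-- `a` is an integer partition of `n` into `k` parts, indexed by `1, …, k`:
a nonincreasing tuple of positive integers summing to `n`. -/
def IsIntegerPartition (n k : ℕ) (a : ℕ → ℕ) : Prop :=
  (∀ j, 1 ≤ j → j ≤ k → 1 ≤ a j) ∧
  (∀ i j, 1 ≤ i → i ≤ j → j ≤ k → a j ≤ a i) ∧
  ∑ j ∈ Finset.Icc 1 k, a j = n

/-- `MoreBalanced k a b` means `a ≺ b`: `b` is more balanced than `a` in the
reverse dominance order, i.e. all partial sums of `a` dominate those of `b`
and the two partitions differ. -/
def MoreBalanced (k : ℕ) (a b : ℕ → ℕ) : Prop :=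
  (∀ J, 1 ≤ J → J ≤ k → ∑ j ∈ Finset.Icc 1 J, b j ≤ ∑ j ∈ Finset.Icc 1 J, a j) ∧
  ∃ j, 1 ≤ j ∧ j ≤ k ∧ a j ≠ b j

namespace BalanceAverseAux




def S (c : ℕ → ℕ) (J : ℕ) : ℕ := ∑ l ∈ Finset.Icc 1 J, c l

lemma S_zero (c : ℕ → ℕ) : S c 0 = 0 := by simp [S]

lemma S_succ (c : ℕ → ℕ) (J : ℕ) : S c (J + 1) = S c J + c (J + 1) :=
  Finset.sum_Icc_succ_top (by omega) c

lemma S_pred (c : ℕ → ℕ) (J : ℕ) (h : 1 ≤ J) : S c J = S c (J - 1) + c J := by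
  obtain ⟨J', rfl⟩ : ∃ J', J = J' + 1 := ⟨J - 1, by omega⟩
  simp only [Nat.add_sub_cancel]
  exact S_succ c J'

lemma chain (W : ℕ → ℝ) (hW : ∀ s, 1 ≤ s → 0 ≤ W s)
    (hlc : ∀ s, 2 ≤ s → W s ^ 2 ≤ W (s - 1) * W (s + 1)) :
    ∀ t s, 2 ≤ t → t ≤ s → W t * W s ≤ W (t - 1) * W (s + 1) := by
  intro t s ht hts
  induction s, hts using Nat.le_induction with
  | base => nlinarith [hlc t ht, hW t (by omega)]
  | succ s hs ih =>
    rcases eq_or_lt_of_le (hW (s + 1) (by omega)) with h0 | hpos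
    · calc W t * W (s + 1) = 0 := by rw [← h0]; ring
        _ ≤ W (t - 1) * W (s + 1 + 1) := mul_nonneg (hW _ (by omega)) (hW _ (by omega))
    · have hlc1 := hlc (s + 1) (by omega)
      rw [show s + 1 - 1 = s by omega] at hlc1
      rcases eq_or_lt_of_le (hW s (by omega)) with h0s | hWs
      · exfalso; rw [← h0s] at hlc1; nlinarith [mul_pos hpos hpos]
      · have hA := mul_le_mul_of_nonneg_right ih (hW (s + 1) (by omega))
        have hB := mul_le_mul_of_nonneg_left hlc1 (hW (t - 1) (by omega))
        have key : W t * W (s + 1) * W s ≤ W (t - 1) * W (s + 1 + 1) * W s := by nlinarith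
        exact le_of_mul_le_mul_right key hWs

lemma anti_of_adj (c : ℕ → ℕ) (k : ℕ)
    (h : ∀ l, 1 ≤ l → l + 1 ≤ k → c (l + 1) ≤ c l) :
    ∀ p q, 1 ≤ p → p ≤ q → q ≤ k → c q ≤ c p := by
  intro p q hp hpq hqk
  induction q, hpq using Nat.le_induction with
  | base => exact le_rfl
  | succ q hq ih => exact le_trans (h q (by omega) hqk) (ih (by omega))

lemma prod_eq_of_S_eq (W : ℕ → ℝ) (k : ℕ) (a b : ℕ → ℕ)
    (h : ∀ J, 1 ≤ J → J ≤ k → S b J = S a J) :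
    ∏ j ∈ Finset.Icc 1 k, W (b j) = ∏ j ∈ Finset.Icc 1 k, W (a j) := by
  refine Finset.prod_congr rfl fun l hl => ?_
  rw [Finset.mem_Icc] at hl
  have e1 := S_pred b l hl.1
  have e2 := S_pred a l hl.1
  have e3 : S b (l - 1) = S a (l - 1) := by
    rcases eq_or_ne l 1 with rfl | hne
    · rw [show (1:ℕ) - 1 = 0 from rfl, S_zero, S_zero]
    · exact h (l - 1) (by omega) (by omega)
  have e4 := h l hl.1 hl.2
  have : b l = a l := by omega
  rw [this]

lemma main (W : ℕ → ℝ) (hW : ∀ s, 1 ≤ s → 0 ≤ W s)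
    (hlc : ∀ s, 2 ≤ s → W s ^ 2 ≤ W (s - 1) * W (s + 1)) :
    ∀ M k a b, 1 ≤ k →
      (∀ j, 1 ≤ j → j ≤ k → 1 ≤ a j) →
      (∀ i j, 1 ≤ i → i ≤ j → j ≤ k → a j ≤ a i) →
      (∀ j, 1 ≤ j → j ≤ k → 1 ≤ b j) →
      (∀ i j, 1 ≤ i → i ≤ j → j ≤ k → b j ≤ b i) →
      S b k = S a k →
      (∀ J, 1 ≤ J → J ≤ k → S b J ≤ S a J) →
      (∑ J ∈ Finset.Icc 1 k, (S a J - S b J)) ≤ M →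
      ∏ j ∈ Finset.Icc 1 k, W (b j) ≤ ∏ j ∈ Finset.Icc 1 k, W (a j) := by
  intro M
  induction M with
  | zero =>
    intro k a b hk ha1 ha2 hb1 hb2 hsum hdom hM
    have hall : ∀ J, 1 ≤ J → J ≤ k → S b J = S a J := by
      intro J h1 h2
      have h3 := Finset.sum_eq_zero_iff.mp (Nat.le_zero.mp hM) J (Finset.mem_Icc.mpr ⟨h1, h2⟩)
      have h4 := hdom J h1 h2
      omega
    exact le_of_eq (prod_eq_of_S_eq W k a b hall)
  | succ M ih =>
    intro k a b hk ha1 ha2 hb1 hb2 hsum hdom hM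
    by_cases hall : ∀ J, 1 ≤ J → J ≤ k → S b J = S a J
    · exact le_of_eq (prod_eq_of_S_eq W k a b hall)
    · classical
      have hex : ∃ J, 1 ≤ J ∧ J ≤ k ∧ S b J < S a J := by
        push_neg at hall
        obtain ⟨J, h1, h2, h3⟩ := hall
        exact ⟨J, h1, h2, lt_of_le_of_ne (hdom J h1 h2) h3⟩
      obtain ⟨i, hi1, hik, hilt, himin⟩ :
          ∃ i, 1 ≤ i ∧ i ≤ k ∧ S b i < S a i ∧
            ∀ J, J < i → ¬(1 ≤ J ∧ J ≤ k ∧ S b J < S a J) :=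
        ⟨Nat.find hex, (Nat.find_spec hex).1, (Nat.find_spec hex).2.1,
          (Nat.find_spec hex).2.2, fun J hJ => Nat.find_min hex hJ⟩
      have heqlt : ∀ J, 1 ≤ J → J < i → S b J = S a J := by
        intro J h1 h2
        have h3 := himin J h2
        have h4 := hdom J h1 (by omega)
        by_contra hne
        exact h3 ⟨h1, by omega, by omega⟩
      have hik_lt : i < k := by
        rcases lt_or_eq_of_le hik with h | h
        · exact h
        · exfalso; rw [h] at hilt; omega
      have hexj : ∃ J, i < J ∧ J ≤ k ∧ S b J = S a J := ⟨k, hik_lt, le_rfl, hsum⟩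
      obtain ⟨j, hij, hjk, hjeq, hjmin⟩ :
          ∃ j, i < j ∧ j ≤ k ∧ S b j = S a j ∧
            ∀ J, J < j → ¬(i < J ∧ J ≤ k ∧ S b J = S a J) :=
        ⟨Nat.find hexj, (Nat.find_spec hexj).1, (Nat.find_spec hexj).2.1,
          (Nat.find_spec hexj).2.2, fun J hJ => Nat.find_min hexj hJ⟩
      have hstrict : ∀ J, i ≤ J → J < j → S b J < S a J := by
        intro J h1 h2
        rcases eq_or_lt_of_le h1 with rfl | h3
        · exact hilt
        · have h4 := hjmin J h2
          have h5 := hdom J (by omega) (by omega)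
          by_contra hc
          exact h4 ⟨h3, by omega, by omega⟩
      -- value facts
      have hbia : b i + 1 ≤ a i := by
        have e1 := S_pred b i hi1
        have e2 := S_pred a i hi1
        have e3 : S b (i - 1) = S a (i - 1) := by
          rcases eq_or_ne i 1 with rfl | hne
          · rw [show (1:ℕ) - 1 = 0 from rfl, S_zero, S_zero]
          · exact heqlt (i - 1) (by omega) (by omega)
        omega
      have hbj2 : a j + 1 ≤ b j := by
        have e1 := S_pred b j (by omega)
        have e2 := S_pred a j (by omega)
        have e3 : S b (j - 1) < S a (j - 1) := hstrict (j - 1) (by omega) (by omega)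
        omega
      have haj1 : 1 ≤ a j := ha1 j (by omega) hjk
      have hbprev : 2 ≤ i → b i + 1 ≤ b (i - 1) := by
        intro h2i
        have e1 : S b (i - 1) = S a (i - 1) := heqlt (i - 1) (by omega) (by omega)
        have e2 : S b (i - 1 - 1) = S a (i - 1 - 1) := by
          rcases eq_or_ne i 2 with rfl | hne
          · rw [show (2:ℕ) - 1 - 1 = 0 from rfl, S_zero, S_zero]
          · exact heqlt (i - 1 - 1) (by omega) (by omega)
        have e3 := S_pred b (i - 1) (by omega)
        have e4 := S_pred a (i - 1) (by omega)
        have e5 : b (i - 1) = a (i - 1) := by omega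
        have e6 : a i ≤ a (i - 1) := ha2 (i - 1) i (by omega) (by omega) hik
        omega
      have hnext : j < k → b (j + 1) + 1 ≤ b j := by
        intro hjlt
        have e1 := hdom (j + 1) (by omega) (by omega)
        have e2 := S_succ b j
        have e3 := S_succ a j
        have e4 : a (j + 1) ≤ a j := ha2 j (j + 1) (by omega) (by omega) (by omega)
        omega
      -- the new partition b'
      set b' : ℕ → ℕ := fun l => if l = i then b i + 1 else if l = j then b j - 1 else b l
        with hb'def
      have hshift : ∀ J, S b' J + (if j ≤ J then 1 else 0) = S b J + (if i ≤ J then 1 else 0) := by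
        intro J
        induction J with
        | zero =>
          rw [S_zero, S_zero, if_neg (by omega), if_neg (by omega)]
        | succ J ihJ =>
          rw [S_succ, S_succ]
          have hb'v : b' (J + 1) = if J + 1 = i then b i + 1
              else if J + 1 = j then b j - 1 else b (J + 1) := rfl
          rw [hb'v]
          rcases eq_or_ne (J + 1) i with h1 | h1
          · rw [if_pos h1, ← h1]
            split_ifs at ihJ ⊢ <;> omega
          · rw [if_neg h1]
            rcases eq_or_ne (J + 1) j with h2 | h2
            · have hbj1 : a (J + 1) + 1 ≤ b (J + 1) := by rw [h2]; exact hbj2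
              have haj1' : 1 ≤ a (J + 1) := by rw [h2]; exact haj1
              rw [if_pos h2, ← h2]
              split_ifs at ihJ ⊢ <;> omega
            · rw [if_neg h2]
              split_ifs at ihJ ⊢ <;> omega
      have hb'lt : ∀ J, J < i → S b' J = S b J := by
        intro J h
        have h2 := hshift J
        rw [if_neg (by omega), if_neg (by omega)] at h2
        omega
      have hb'mid : ∀ J, i ≤ J → J < j → S b' J = S b J + 1 := by
        intro J h1 h2
        have h3 := hshift J
        rw [if_neg (by omega), if_pos h1] at h3
        omega
      have hb'ge : ∀ J, j ≤ J → S b' J = S b J := by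
        intro J h
        have h2 := hshift J
        rw [if_pos h, if_pos (by omega)] at h2
        omega
      -- b' is a partition
      have hb'1 : ∀ l, 1 ≤ l → l ≤ k → 1 ≤ b' l := by
        intro l h1 h2
        rw [hb'def]
        dsimp only
        split_ifs with hA hB
        · omega
        · omega
        · exact hb1 l h1 h2
      have hb'2adj : ∀ l, 1 ≤ l → l + 1 ≤ k → b' (l + 1) ≤ b' l := by
        intro l hl hlk
        rw [hb'def]
        dsimp only
        rcases eq_or_ne (l + 1) i with h1 | h1
        · rw [if_pos h1, if_neg (by omega : l ≠ i), if_neg (by omega : l ≠ j)]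
          have h2i : 2 ≤ i := by omega
          have h3 := hbprev h2i
          rw [show l = i - 1 by omega]
          omega
        · rw [if_neg h1]
          rcases eq_or_ne (l + 1) j with h2 | h2
          · rw [if_pos h2]
            rcases eq_or_ne l i with h3 | h3
            · rw [if_pos h3]
              have h4 : b j ≤ b i := hb2 i j hi1 (by omega) hjk
              omega
            · rw [if_neg h3, if_neg (by omega : l ≠ j)]
              have h4 : b j ≤ b l := hb2 l j hl (by omega) hjk
              omega
          · rw [if_neg h2]
            rcases eq_or_ne l i with h3 | h3
            · rw [if_pos h3, ← h3]
              exact le_trans (hb2 l (l + 1) hl (by omega) hlk) (by omega)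
            · rcases eq_or_ne l j with h4 | h4
              · rw [if_neg h3, if_pos h4, h4]
                have h5 := hnext (by omega)
                omega
              · rw [if_neg h3, if_neg h4]
                exact hb2 l (l + 1) hl (by omega) hlk
      have hb'2 : ∀ p q, 1 ≤ p → p ≤ q → q ≤ k → b' q ≤ b' p :=
        anti_of_adj b' k hb'2adj
      have hsum' : S b' k = S a k := by rw [hb'ge k hjk]; exact hsum
      have hdom' : ∀ J, 1 ≤ J → J ≤ k → S b' J ≤ S a J := by
        intro J h1 h2
        rcases lt_or_ge J i with h3 | h3
        · rw [hb'lt J h3]; exact hdom J h1 h2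
        · rcases lt_or_ge J j with h4 | h4
          · rw [hb'mid J h3 h4]
            have := hstrict J h3 h4
            omega
          · rw [hb'ge J h4]; exact hdom J h1 h2
      -- measure decreases
      have hmeas : (∑ J ∈ Finset.Icc 1 k, (S a J - S b' J)) < ∑ J ∈ Finset.Icc 1 k, (S a J - S b J) := by
        apply Finset.sum_lt_sum
        · intro J hJ
          rw [Finset.mem_Icc] at hJ
          rcases lt_or_ge J i with h3 | h3
          · rw [hb'lt J h3]
          · rcases lt_or_ge J j with h4 | h4
            · rw [hb'mid J h3 h4]; omega
            · rw [hb'ge J h4]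
        · refine ⟨i, Finset.mem_Icc.mpr ⟨hi1, hik⟩, ?_⟩
          rw [hb'mid i le_rfl hij]
          omega
      have hM' : (∑ J ∈ Finset.Icc 1 k, (S a J - S b' J)) ≤ M := by omega
      -- product inequality for the single move
      have hstep : ∏ l ∈ Finset.Icc 1 k, W (b l) ≤ ∏ l ∈ Finset.Icc 1 k, W (b' l) := by
        have hi_mem : i ∈ Finset.Icc 1 k := Finset.mem_Icc.mpr ⟨hi1, hik⟩
        have hj_mem : j ∈ (Finset.Icc 1 k).erase i :=
          Finset.mem_erase.mpr ⟨by omega, Finset.mem_Icc.mpr ⟨by omega, hjk⟩⟩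
        have e_b : ∏ l ∈ Finset.Icc 1 k, W (b l)
            = W (b i) * (W (b j) * ∏ l ∈ ((Finset.Icc 1 k).erase i).erase j, W (b l)) := by
          rw [← Finset.mul_prod_erase (Finset.Icc 1 k) (fun l => W (b l)) hi_mem,
            ← Finset.mul_prod_erase ((Finset.Icc 1 k).erase i) (fun l => W (b l)) hj_mem]
        have e_b' : ∏ l ∈ Finset.Icc 1 k, W (b' l)
            = W (b i + 1) * (W (b j - 1) * ∏ l ∈ ((Finset.Icc 1 k).erase i).erase j, W (b' l)) := by
          rw [← Finset.mul_prod_erase (Finset.Icc 1 k) (fun l => W (b' l)) hi_mem,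
            ← Finset.mul_prod_erase ((Finset.Icc 1 k).erase i) (fun l => W (b' l)) hj_mem]
          have v1 : b' i = b i + 1 := by rw [hb'def]; simp
          have v2 : b' j = b j - 1 := by
            rw [hb'def]; dsimp only; rw [if_neg (by omega : j ≠ i), if_pos rfl]
          rw [v1, v2]
        have e_rest : ∏ l ∈ ((Finset.Icc 1 k).erase i).erase j, W (b' l)
            = ∏ l ∈ ((Finset.Icc 1 k).erase i).erase j, W (b l) := by
          refine Finset.prod_congr rfl fun l hl => ?_
          rw [Finset.mem_erase, Finset.mem_erase] at hl
          rw [hb'def]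
          dsimp only
          rw [if_neg hl.2.1, if_neg hl.1]
        rw [e_b, e_b', e_rest]
        have hP : (0:ℝ) ≤ ∏ l ∈ ((Finset.Icc 1 k).erase i).erase j, W (b l) := by
          apply Finset.prod_nonneg
          intro l hl
          have hl' : l ∈ Finset.Icc 1 k :=
            Finset.mem_of_mem_erase (Finset.mem_of_mem_erase hl)
          rw [Finset.mem_Icc] at hl'
          exact hW (b l) (hb1 l hl'.1 hl'.2)
        have hchain : W (b j) * W (b i) ≤ W (b j - 1) * W (b i + 1) :=
          chain W hW hlc (b j) (b i) (by omega) (hb2 i j hi1 (by omega) hjk)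
        calc W (b i) * (W (b j) * ∏ l ∈ ((Finset.Icc 1 k).erase i).erase j, W (b l))
            = (W (b j) * W (b i)) * ∏ l ∈ ((Finset.Icc 1 k).erase i).erase j, W (b l) := by ring
          _ ≤ (W (b j - 1) * W (b i + 1)) * ∏ l ∈ ((Finset.Icc 1 k).erase i).erase j, W (b l) :=
              mul_le_mul_of_nonneg_right hchain hP
          _ = W (b i + 1) * (W (b j - 1) * ∏ l ∈ ((Finset.Icc 1 k).erase i).erase j, W (b l)) := by
              ring
      exact le_trans hstep (ih k a b' hk ha1 ha2 hb'1 hb'2 hsum' hdom' hM')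

end BalanceAverseAux

/-- A Gibbs partition with weights `W` is balance-averse (for every `n`)
if and only if `W` is log-convex. -/
theorem balance_averse_iff_logConvex
    (W : ℕ → ℝ) (hW : ∀ s, 1 ≤ s → 0 ≤ W s) (hW1 : W 1 = 1) :
    (∀ s : ℕ, 2 ≤ s → (W s) ^ 2 ≤ W (s - 1) * W (s + 1)) ↔
    (∀ n k : ℕ, 1 ≤ n → 1 ≤ k → k ≤ n →
      ∀ a b : ℕ → ℕ, IsIntegerPartition n k a → IsIntegerPartition n k b →
        MoreBalanced k a b →
        ∏ j ∈ Finset.Icc 1 k, W (b j) ≤ ∏ j ∈ Finset.Icc 1 k, W (a j)) := by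
  constructor
  · intro hlc n k hn hk hkn a b ha hb hmb
    obtain ⟨ha1, ha2, ha3⟩ := ha
    obtain ⟨hb1, hb2, hb3⟩ := hb
    obtain ⟨hdom, -⟩ := hmb
    have hsum : BalanceAverseAux.S b k = BalanceAverseAux.S a k := by
      show (∑ j ∈ Finset.Icc 1 k, b j) = ∑ j ∈ Finset.Icc 1 k, a j
      rw [hb3, ha3]
    exact BalanceAverseAux.main W hW hlc
      (∑ J ∈ Finset.Icc 1 k, (BalanceAverseAux.S a J - BalanceAverseAux.S b J))
      k a b hk ha1 ha2 hb1 hb2 hsum hdom le_rfl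
  · intro h s hs
    set a : ℕ → ℕ := fun l => if l = 1 then s + 1 else s - 1 with hadef
    set b : ℕ → ℕ := fun _ => s with hbdef
    have hIcc : (Finset.Icc 1 2 : Finset ℕ) = {1, 2} := by decide
    have hIcc1 : (Finset.Icc 1 1 : Finset ℕ) = {1} := by decide
    have ha1v : a 1 = s + 1 := by simp [hadef]
    have ha2v : a 2 = s - 1 := by simp [hadef]
    have hpa : IsIntegerPartition (2 * s) 2 a := by
      refine ⟨?_, ?_, ?_⟩
      · intro j h1 h2
        rcases eq_or_ne j 1 with rfl | hne
        · rw [ha1v]; omega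
        · have hj2 : j = 2 := by omega
          rw [hj2, ha2v]; omega
      · intro p q h1 h2 h3
        rcases eq_or_ne p 1 with rfl | hp1
        · rcases eq_or_ne q 1 with rfl | hq1
          · exact le_rfl
          · have hq2 : q = 2 := by omega
            rw [hq2, ha1v, ha2v]; omega
        · have hp2 : p = 2 := by omega
          have hq2 : q = 2 := by omega
          rw [hp2, hq2]
      · rw [hIcc, Finset.sum_insert (by decide), Finset.sum_singleton, ha1v, ha2v]
        omega
    have hpb : IsIntegerPartition (2 * s) 2 b := by
      refine ⟨?_, fun p q h1 h2 h3 => le_rfl, ?_⟩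
      · intro j h1 h2
        simp only [hbdef]
        omega
      · rw [hIcc, Finset.sum_insert (by decide), Finset.sum_singleton]
        simp only [hbdef]
        omega
    have hmb : MoreBalanced 2 a b := by
      constructor
      · intro J h1 h2
        rcases eq_or_ne J 1 with rfl | hne
        · rw [hIcc1, Finset.sum_singleton, Finset.sum_singleton, ha1v]
          simp only [hbdef]
          omega
        · have hJ2 : J = 2 := by omega
          rw [hJ2, hIcc, Finset.sum_insert (by decide), Finset.sum_insert (by decide),
            Finset.sum_singleton, Finset.sum_singleton, ha1v, ha2v]
          simp only [hbdef]
          omega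
      · refine ⟨1, le_rfl, by omega, ?_⟩
        rw [ha1v]
        simp only [hbdef]
        omega
    have hkey := h (2 * s) 2 (by omega) (by omega) (by omega) a b hpa hpb hmb
    rw [hIcc, Finset.prod_insert (by decide), Finset.prod_singleton,
      Finset.prod_insert (by decide), Finset.prod_singleton, ha1v, ha2v] at hkey
    simp only [hbdef] at hkey
    nlinarith [hkey]
end

section
/- Let W = (W_s)_{s≥1} be a sequence of nonnegative reals with W_1 = 1. Then the following are equivalent: (i) W is log-concave, i.e. W_s² ≥ W_{s−1}W_{s+1} for all s ≥ 2 and W has no internal zeros; (ii) for every n ≥ 1, every 1 ≤ k ≤ n, and every pair of integer partitions 𝐧 = (n_1,…,n_k) and 𝐧' = (n'_1,…,n'_k) of n into k parts with 𝐧 ≺ 𝐧', one has ∏_{j=1}^k W_{n_j} ≤ ∏_{j=1}^k W_{n'_j}. (This is the statement that a Gibbs partition with EPPF p(n_1,…,n_k) = V_{n,k}∏_j W_{n_j} is balance-seeking if and only if W is log-concave.) -/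
/-- The sequence `(W_s)_{s ≥ 1}` has no internal zeros. -/
def NoInternalZeros (W : ℕ → ℝ) : Prop :=
  ∀ u s v : ℕ, 1 ≤ u → u ≤ s → s ≤ v → 0 < W u → 0 < W v → 0 < W s


def psum (a : ℕ → ℕ) (J : ℕ) : ℕ := ∑ j ∈ Finset.Icc 1 J, a j

lemma psum_succ (a : ℕ → ℕ) (J : ℕ) : psum a (J + 1) = psum a J + a (J + 1) :=
  Finset.sum_Icc_succ_top (by omega) a

lemma psum_lt_of (a b : ℕ → ℕ) (i J : ℕ) (hiJ : i ≤ J)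
    (h1 : psum b i < psum a i) (hterm : ∀ j, i < j → j ≤ J → b j ≤ a j) :
    psum b J < psum a J := by
  induction J, hiJ using Nat.le_induction with
  | base => exact h1
  | succ J hJ ih =>
    rw [psum_succ, psum_succ]
    have h2 := hterm (J + 1) (by omega) le_rfl
    have h3 := ih (fun j hj hj2 => hterm j hj (by omega))
    omega

lemma psum_congr (a b : ℕ → ℕ) (J : ℕ) (h : ∀ j, 1 ≤ j → j ≤ J → a j = b j) :
    psum a J = psum b J := by
  apply Finset.sum_congr rfl
  intro j hj
  rw [Finset.mem_Icc] at hj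
  exact h j hj.1 hj.2


lemma lemA (W : ℕ → ℝ) (hW : ∀ s, 1 ≤ s → 0 ≤ W s)
    (hlc : ∀ s : ℕ, 2 ≤ s → W (s - 1) * W (s + 1) ≤ (W s) ^ 2)
    (hniz : NoInternalZeros W) :
    ∀ d y : ℕ, 1 ≤ y → W y * W (y + d + 1) ≤ W (y + 1) * W (y + d) := by
  intro d
  induction d with
  | zero => intro y hy; ring_nf; exact le_rfl
  | succ d ih =>
    intro y hy
    rcases eq_or_lt_of_le (hW y hy) with h0 | hy0
    · have : W y * W (y + (d+1) + 1) = 0 := by rw [← h0]; ring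
      rw [this]
      exact mul_nonneg (hW (y+1) (by omega)) (hW (y + (d+1)) (by omega))
    rcases eq_or_lt_of_le (hW (y + d + 2) (by omega)) with h0 | htop
    · have : W y * W (y + (d+1) + 1) = 0 := by
        have : y + (d+1) + 1 = y + d + 2 := by omega
        rw [this, ← h0]; ring
      rw [this]
      exact mul_nonneg (hW (y+1) (by omega)) (hW (y + (d+1)) (by omega))
    · have hmid1 : 0 < W (y + d + 1) :=
        hniz y (y + d + 1) (y + d + 2) hy (by omega) (by omega) hy0 htop
      have hmid0 : 0 < W (y + d) :=
        hniz y (y + d) (y + d + 2) hy (by omega) (by omega) hy0 htop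
      have hlc' : W (y + d) * W (y + d + 2) ≤ (W (y + d + 1)) ^ 2 := by
        have := hlc (y + d + 1) (by omega)
        have h1 : y + d + 1 - 1 = y + d := by omega
        have h2 : y + d + 1 + 1 = y + d + 2 := by omega
        rwa [h1, h2] at this
      have ihy := ih y hy
      have key : W y * W (y + d + 2) * W (y + d + 1) ≤
          W (y + 1) * W (y + d + 1) * W (y + d + 1) := by
        nlinarith [mul_le_mul_of_nonneg_right ihy (hW (y + d + 2) (by omega)),
          mul_le_mul_of_nonneg_left hlc' (hW (y + 1) (by omega))]
      have := le_of_mul_le_mul_right key hmid1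
      have he : y + (d+1) + 1 = y + d + 2 := by omega
      have he2 : y + (d+1) = y + d + 1 := by omega
      rw [he, he2]
      exact this

lemma transfer (W : ℕ → ℝ) (hW : ∀ s, 1 ≤ s → 0 ≤ W s)
    (hlc : ∀ s : ℕ, 2 ≤ s → W (s - 1) * W (s + 1) ≤ (W s) ^ 2)
    (hniz : NoInternalZeros W) :
    ∀ y x : ℕ, 1 ≤ y → y + 2 ≤ x → W y * W x ≤ W (y + 1) * W (x - 1) := by
  intro y x hy hx
  obtain ⟨d, rfl⟩ : ∃ d, x = y + d + 1 := ⟨x - y - 1, by omega⟩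
  have := lemA W hW hlc hniz d y hy
  have h : y + d + 1 - 1 = y + d := by omega
  rw [h]
  exact this

lemma step_lemma (W : ℕ → ℝ) (hW : ∀ s, 1 ≤ s → 0 ≤ W s)
    (htr : ∀ y x : ℕ, 1 ≤ y → y + 2 ≤ x → W y * W x ≤ W (y + 1) * W (x - 1))
    (k n : ℕ) (a b : ℕ → ℕ) (hk : 1 ≤ k)
    (ha : IsIntegerPartition n k a) (hb : IsIntegerPartition n k b)
    (hbal : ∀ J, 1 ≤ J → J ≤ k → psum b J ≤ psum a J)
    (hne : ∃ j, 1 ≤ j ∧ j ≤ k ∧ a j ≠ b j) :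
    ∃ a' : ℕ → ℕ, IsIntegerPartition n k a' ∧
      (∀ J, 1 ≤ J → J ≤ k → psum b J ≤ psum a' J) ∧
      (∑ J ∈ Finset.Icc 1 k, (psum a' J - psum b J)) <
        (∑ J ∈ Finset.Icc 1 k, (psum a J - psum b J)) ∧
      (∏ j ∈ Finset.Icc 1 k, W (a j)) ≤ (∏ j ∈ Finset.Icc 1 k, W (a' j)) := by
  obtain ⟨hapos, hamono, hasum⟩ := ha
  obtain ⟨hbpos, hbmono, hbsum⟩ := hb
  classical
  -- i : least differing index
  obtain ⟨i, ⟨hi1, hik, hiab⟩, himin⟩ :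
      ∃ i, (1 ≤ i ∧ i ≤ k ∧ a i ≠ b i) ∧ ∀ j, j < i → ¬(1 ≤ j ∧ j ≤ k ∧ a j ≠ b j) :=
    ⟨Nat.find hne, Nat.find_spec hne, fun j hj => Nat.find_min hne hj⟩
  have hprefix : ∀ j, 1 ≤ j → j < i → a j = b j := by
    intro j h1 h2
    by_contra h
    exact himin j h2 ⟨h1, by omega, h⟩
  have hbi_lt : b i < a i := by
    have hIb := hbal i hi1 hik
    obtain ⟨i', rfl⟩ : ∃ i', i = i' + 1 := ⟨i - 1, by omega⟩
    rw [psum_succ, psum_succ] at hIb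
    have : psum a i' = psum b i' := psum_congr a b i' (fun j h1 h2 => hprefix j h1 (by omega))
    omega
  have hpsum_i : psum b i < psum a i := by
    obtain ⟨i', rfl⟩ : ∃ i', i = i' + 1 := ⟨i - 1, by omega⟩
    rw [psum_succ, psum_succ]
    have : psum a i' = psum b i' := psum_congr a b i' (fun j h1 h2 => hprefix j h1 (by omega))
    omega
  -- l : least index > i with a l < b l
  have hlex : ∃ l, i < l ∧ l ≤ k ∧ a l < b l := by
    by_contra h
    push_neg at h
    have : psum b k < psum a k := psum_lt_of a b i k hik hpsum_i
      (fun j hj hj2 => h j hj hj2)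
    have h1 : psum a k = n := hasum
    have h2 : psum b k = n := hbsum
    omega
  obtain ⟨l, ⟨hil, hlk, hal_lt⟩, hlmin0⟩ :
      ∃ l, (i < l ∧ l ≤ k ∧ a l < b l) ∧ ∀ j, j < l → ¬(i < j ∧ j ≤ k ∧ a j < b j) :=
    ⟨Nat.find hlex, Nat.find_spec hlex, fun j hj => Nat.find_min hlex hj⟩
  have hlmin : ∀ j, i < j → j < l → b j ≤ a j := by
    intro j h1 h2
    by_contra h
    exact hlmin0 j h2 ⟨h1, by omega, by omega⟩
  -- gap : a l + 2 ≤ a i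
  have hgap : a l + 2 ≤ a i := by
    have h1 : b l ≤ b i := hbmono i l hi1 (le_of_lt hil) hlk
    omega
  -- strict partial sums on [i, l-1]
  have hstrict : ∀ J, i ≤ J → J < l → psum b J < psum a J := by
    intro J h1 h2
    exact psum_lt_of a b i J h1 hpsum_i (fun j hj hj2 => hlmin j hj (by omega))
  -- p : last index with value a i (among [i,k])
  obtain ⟨p, ⟨hip, hap⟩, hpk, hlast0⟩ :
      ∃ p, (i ≤ p ∧ a p = a i) ∧ p ≤ k ∧ ∀ m, p < m → m ≤ k → ¬(i ≤ m ∧ a m = a i) :=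
    ⟨Nat.findGreatest (fun j => i ≤ j ∧ a j = a i) k,
      Nat.findGreatest_spec (P := fun j => i ≤ j ∧ a j = a i) hik ⟨le_rfl, rfl⟩,
      Nat.findGreatest_le k,
      fun m h1 h2 => Nat.findGreatest_is_greatest (P := fun j => i ≤ j ∧ a j = a i) h1 h2⟩
  have hp1 : 1 ≤ p := le_trans hi1 hip
  have hlast : ∀ m, p < m → m ≤ k → a m ≠ a i := by
    intro m h1 h2 h3
    exact hlast0 m h1 h2 ⟨by omega, h3⟩
  -- q : first index with value a l
  have hqex : ∃ j, 1 ≤ j ∧ a j = a l := ⟨l, by omega, rfl⟩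
  obtain ⟨q, ⟨hq1, haq⟩, hqmin0, hql⟩ :
      ∃ q, (1 ≤ q ∧ a q = a l) ∧ (∀ m, m < q → ¬(1 ≤ m ∧ a m = a l)) ∧ q ≤ l :=
    ⟨Nat.find hqex, Nat.find_spec hqex, fun m hm => Nat.find_min hqex hm,
      Nat.find_min' hqex ⟨by omega, rfl⟩⟩
  have hqk : q ≤ k := le_trans hql hlk
  have hfirst : ∀ m, 1 ≤ m → m < q → a m ≠ a l := by
    intro m h1 h2 h3
    exact hqmin0 m h2 ⟨h1, h3⟩
  have hpq : p < q := by
    by_contra h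
    push_neg at h
    have := hamono q p hq1 h hpk
    omega
  -- the new partition
  set a' : ℕ → ℕ := fun j => if j = p then a p - 1 else if j = q then a q + 1 else a j
    with ha'_def
  have ha'p : a' p = a p - 1 := by simp [ha'_def]
  have ha'q : a' q = a q + 1 := by simp [ha'_def, Nat.ne_of_gt hpq]
  have ha'other : ∀ j, j ≠ p → j ≠ q → a' j = a j := by
    intro j h1 h2; simp [ha'_def, h1, h2]
  -- pointwise identity
  have hpt : ∀ j, a' j + (if j = p then 1 else 0) = a j + (if j = q then 1 else 0) := by
    intro j
    by_cases h1 : j = p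
    · subst h1
      simp [ha'p, Nat.ne_of_lt hpq]
      omega
    by_cases h2 : j = q
    · subst h2; simp [ha'q, h1]
    · simp [ha'other j h1 h2, h1, h2]
  -- partial sum identity
  have hid : ∀ J, psum a' J + (if p ≤ J then 1 else 0) = psum a J + (if q ≤ J then 1 else 0) := by
    intro J
    have h1 : psum a' J + ∑ j ∈ Finset.Icc 1 J, (if j = p then 1 else 0) =
        psum a J + ∑ j ∈ Finset.Icc 1 J, (if j = q then 1 else 0) := by
      rw [psum, psum, ← Finset.sum_add_distrib, ← Finset.sum_add_distrib]
      exact Finset.sum_congr rfl (fun j _ => hpt j)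
    rw [Finset.sum_ite_eq', Finset.sum_ite_eq'] at h1
    simp only [Finset.mem_Icc] at h1
    by_cases hpJ : p ≤ J <;> by_cases hqJ : q ≤ J <;>
      simp [hpJ, hqJ, hp1, hq1] at h1 ⊢ <;> omega
  have hSle : ∀ J, psum a' J ≤ psum a J := by
    intro J
    have := hid J
    by_cases hpJ : p ≤ J <;> by_cases hqJ : q ≤ J <;> simp [hpJ, hqJ] at this <;> omega
  have hSeq : ∀ J, p ≤ J → J < q → psum a' J + 1 = psum a J := by
    intro J h1 h2
    have h3 := hid J
    have hnq : ¬ q ≤ J := by omega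
    simp [h1, hnq] at h3
    omega
  have hSeq' : ∀ J, ¬(p ≤ J ∧ J < q) → psum a' J = psum a J := by
    intro J h
    have := hid J
    by_cases hpJ : p ≤ J <;> by_cases hqJ : q ≤ J <;> simp [hpJ, hqJ] at this <;> omega
  -- a' is a partition
  have ha'pos : ∀ j, 1 ≤ j → j ≤ k → 1 ≤ a' j := by
    intro j h1 h2
    by_cases hjp : j = p
    · rw [hjp, ha'p, hap]; omega
    by_cases hjq : j = q
    · rw [hjq, ha'q]; omega
    · rw [ha'other j hjp hjq]; exact hapos j h1 h2
  have ha'mono : ∀ m m', 1 ≤ m → m ≤ m' → m' ≤ k → a' m' ≤ a' m := by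
    intro m m' h1 h2 h3
    rcases eq_or_lt_of_le h2 with rfl | hlt
    · exact le_rfl
    by_cases hm'p : m' = p
    · have hmp : m ≠ p := by omega
      have hmq : m ≠ q := by omega
      rw [hm'p, ha'p, ha'other m hmp hmq]
      have := hamono m p h1 (by omega) hpk
      omega
    by_cases hm'q : m' = q
    · rw [hm'q, ha'q]
      by_cases hmp : m = p
      · rw [hmp, ha'p, hap, haq]; omega
      · have hmq : m ≠ q := by omega
        rw [ha'other m hmp hmq, haq]
        have h4 := hamono m q h1 (by omega) hqk
        have h5 := hfirst m h1 (by omega)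
        rw [haq] at h4
        omega
    · rw [ha'other m' hm'p hm'q]
      by_cases hmp : m = p
      · rw [hmp, ha'p]
        have h4 := hlast m' (by omega) h3
        have h5 := hamono p m' hp1 (by omega) h3
        rw [hap] at h5
        omega
      by_cases hmq : m = q
      · rw [hmq, ha'q]
        have := hamono q m' hq1 (by omega) h3
        omega
      · rw [ha'other m hmp hmq]
        exact hamono m m' h1 h2 h3
  have ha'sum : psum a' k = n := by
    have h0 := hid k
    have hh1 : p ≤ k := hpk
    have hh2 : q ≤ k := hqk
    simp [hh1, hh2] at h0
    have h2 : psum a k = n := hasum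
    omega
  -- balance for a'
  have hbal' : ∀ J, 1 ≤ J → J ≤ k → psum b J ≤ psum a' J := by
    intro J h1 h2
    by_cases h : p ≤ J ∧ J < q
    · have h3 := hSeq J h.1 h.2
      have h4 := hstrict J (le_trans hip h.1) (by omega)
      omega
    · rw [hSeq' J h]
      exact hbal J h1 h2
  -- measure decreases
  have hmeas : (∑ J ∈ Finset.Icc 1 k, (psum a' J - psum b J)) <
      (∑ J ∈ Finset.Icc 1 k, (psum a J - psum b J)) := by
    apply Finset.sum_lt_sum
    · intro J _
      exact Nat.sub_le_sub_right (hSle J) _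
    · refine ⟨p, Finset.mem_Icc.mpr ⟨hp1, hpk⟩, ?_⟩
      have h1 := hSeq p le_rfl hpq
      have h2 := hbal' p hp1 hpk
      omega
  -- product inequality
  have hprod : (∏ j ∈ Finset.Icc 1 k, W (a j)) ≤ (∏ j ∈ Finset.Icc 1 k, W (a' j)) := by
    have hpmem : p ∈ Finset.Icc 1 k := Finset.mem_Icc.mpr ⟨hp1, hpk⟩
    have hqmem : q ∈ (Finset.Icc 1 k).erase p :=
      Finset.mem_erase.mpr ⟨Nat.ne_of_gt hpq, Finset.mem_Icc.mpr ⟨hq1, hqk⟩⟩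
    have erest : (∏ j ∈ ((Finset.Icc 1 k).erase p).erase q, W (a' j)) =
        (∏ j ∈ ((Finset.Icc 1 k).erase p).erase q, W (a j)) := by
      apply Finset.prod_congr rfl
      intro j hj
      rw [Finset.mem_erase, Finset.mem_erase] at hj
      rw [ha'other j hj.2.1 hj.1]
    have e1 : (∏ j ∈ Finset.Icc 1 k, W (a j)) =
        W (a p) * (W (a q) * ∏ j ∈ ((Finset.Icc 1 k).erase p).erase q, W (a j)) := by
      rw [← Finset.mul_prod_erase _ (fun j => W (a j)) hpmem,
        ← Finset.mul_prod_erase _ (fun j => W (a j)) hqmem]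
    have e2 : (∏ j ∈ Finset.Icc 1 k, W (a' j)) =
        W (a p - 1) * (W (a q + 1) * ∏ j ∈ ((Finset.Icc 1 k).erase p).erase q, W (a j)) := by
      rw [← Finset.mul_prod_erase _ (fun j => W (a' j)) hpmem,
        ← Finset.mul_prod_erase _ (fun j => W (a' j)) hqmem, erest, ha'p, ha'q]
    rw [e1, e2]
    have hrest : 0 ≤ ∏ j ∈ ((Finset.Icc 1 k).erase p).erase q, W (a j) := by
      apply Finset.prod_nonneg
      intro j hj
      rw [Finset.mem_erase, Finset.mem_erase, Finset.mem_Icc] at hj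
      exact hW (a j) (hapos j hj.2.2.1 hj.2.2.2)
    have hkey : W (a p) * W (a q) ≤ W (a p - 1) * W (a q + 1) := by
      have haq1 : 1 ≤ a q := by rw [haq]; exact hapos l (by omega) hlk
      have hgap2 : a q + 2 ≤ a p := by rw [haq, hap]; exact hgap
      have := htr (a q) (a p) haq1 hgap2
      nlinarith [this]
    calc W (a p) * (W (a q) * ∏ j ∈ ((Finset.Icc 1 k).erase p).erase q, W (a j))
        = (W (a p) * W (a q)) * ∏ j ∈ ((Finset.Icc 1 k).erase p).erase q, W (a j) := by ring
      _ ≤ (W (a p - 1) * W (a q + 1)) * ∏ j ∈ ((Finset.Icc 1 k).erase p).erase q, W (a j) :=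
          mul_le_mul_of_nonneg_right hkey hrest
      _ = W (a p - 1) * (W (a q + 1) * ∏ j ∈ ((Finset.Icc 1 k).erase p).erase q, W (a j)) := by
          ring
  exact ⟨a', ⟨ha'pos, ha'mono, ha'sum⟩, hbal', hmeas, hprod⟩

lemma forward_aux (W : ℕ → ℝ) (hW : ∀ s, 1 ≤ s → 0 ≤ W s)
    (htr : ∀ y x : ℕ, 1 ≤ y → y + 2 ≤ x → W y * W x ≤ W (y + 1) * W (x - 1)) :
    ∀ D k n : ℕ, ∀ a b : ℕ → ℕ, 1 ≤ k →
    IsIntegerPartition n k a → IsIntegerPartition n k b →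
    (∀ J, 1 ≤ J → J ≤ k → psum b J ≤ psum a J) →
    (∑ J ∈ Finset.Icc 1 k, (psum a J - psum b J)) ≤ D →
    (∏ j ∈ Finset.Icc 1 k, W (a j)) ≤ (∏ j ∈ Finset.Icc 1 k, W (b j)) := by
  intro D
  induction D with
  | zero =>
    intro k n a b hk ha hb hbal hmeas
    by_cases hab : ∀ j, 1 ≤ j → j ≤ k → a j = b j
    · apply le_of_eq
      apply Finset.prod_congr rfl
      intro j hj
      rw [Finset.mem_Icc] at hj
      rw [hab j hj.1 hj.2]
    · push_neg at hab
      obtain ⟨j0, h1, h2, h3⟩ := hab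
      obtain ⟨a', _, hbal', hlt, _⟩ :=
        step_lemma W hW htr k n a b hk ha hb hbal ⟨j0, h1, h2, h3⟩
      omega
  | succ D ih =>
    intro k n a b hk ha hb hbal hmeas
    by_cases hab : ∀ j, 1 ≤ j → j ≤ k → a j = b j
    · apply le_of_eq
      apply Finset.prod_congr rfl
      intro j hj
      rw [Finset.mem_Icc] at hj
      rw [hab j hj.1 hj.2]
    · push_neg at hab
      obtain ⟨j0, h1, h2, h3⟩ := hab
      obtain ⟨a', ha', hbal', hlt, hprod⟩ :=
        step_lemma W hW htr k n a b hk ha hb hbal ⟨j0, h1, h2, h3⟩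
      exact le_trans hprod (ih k n a' b hk ha' hb hbal' (by omega))

lemma sum_Icc_two (f : ℕ → ℕ) : ∑ j ∈ Finset.Icc 1 2, f j = f 1 + f 2 := by
  rw [show (2:ℕ) = 1 + 1 from rfl, Finset.sum_Icc_succ_top (by norm_num), Finset.Icc_self,
    Finset.sum_singleton]

lemma prod_Icc_two (f : ℕ → ℝ) : ∏ j ∈ Finset.Icc 1 2, f j = f 1 * f 2 := by
  rw [show (2:ℕ) = 1 + 1 from rfl, Finset.prod_Icc_succ_top (by norm_num), Finset.Icc_self,
    Finset.prod_singleton]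

/-- A Gibbs partition with weights `W` is balance-seeking (for every `n`)
if and only if `W` is log-concave (with no internal zeros). -/
theorem balance_seeking_iff_logConcave
    (W : ℕ → ℝ) (hW : ∀ s, 1 ≤ s → 0 ≤ W s) (hW1 : W 1 = 1) :
    ((∀ s : ℕ, 2 ≤ s → W (s - 1) * W (s + 1) ≤ (W s) ^ 2) ∧ NoInternalZeros W) ↔
    (∀ n k : ℕ, 1 ≤ n → 1 ≤ k → k ≤ n →
      ∀ a b : ℕ → ℕ, IsIntegerPartition n k a → IsIntegerPartition n k b →
        MoreBalanced k a b →
        ∏ j ∈ Finset.Icc 1 k, W (a j) ≤ ∏ j ∈ Finset.Icc 1 k, W (b j)) := by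
  constructor
  · rintro ⟨hlc, hniz⟩ n k hn hk hkn a b ha hb hmb
    exact forward_aux W hW (transfer W hW hlc hniz)
      (∑ J ∈ Finset.Icc 1 k, (psum a J - psum b J)) k n a b hk ha hb hmb.1 le_rfl
  · intro hB
    constructor
    · intro s hs
      have key := hB (2 * s) 2 (by omega) (by omega) (by omega)
        (fun j => if j ≤ 1 then s + 1 else s - 1) (fun _ => s)
        ⟨by intro j h1 h2; by_cases h : j ≤ 1 <;> simp [h] <;> omega,
         by intro i j h1 h2 h3; by_cases hi : i ≤ 1 <;> by_cases hj : j ≤ 1 <;>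
            simp [hi, hj] <;> omega,
         by rw [sum_Icc_two]; norm_num; omega⟩
        ⟨by intro j h1 h2; show 1 ≤ s; omega,
         by intro i j h1 h2 h3; exact le_rfl,
         by rw [sum_Icc_two]; show s + s = 2 * s; omega⟩
        ⟨by
          intro J h1 h2
          have : J = 1 ∨ J = 2 := by omega
          rcases this with rfl | rfl
          · simp [Finset.Icc_self, Finset.sum_singleton]
          · rw [sum_Icc_two, sum_Icc_two]; norm_num <;> omega,
         ⟨1, by omega, by omega, by norm_num⟩⟩
      rw [prod_Icc_two, prod_Icc_two] at key
      norm_num at key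
      nlinarith [key]
    · intro u s v hu hus hsv hWu hWv
      rcases eq_or_lt_of_le hus with rfl | h1
      · exact hWu
      rcases eq_or_lt_of_le hsv with rfl | h2
      · exact hWv
      obtain ⟨t, ht⟩ : ∃ t, t = u + v - s := ⟨_, rfl⟩
      have hs1 : 1 ≤ s := by omega
      have ht1 : 1 ≤ t := by omega
      have hsv' : s < v := h2
      have htv : t < v := by omega
      have hmax1 : 1 ≤ max s t := le_trans hs1 (le_max_left s t)
      have hmin1 : 1 ≤ min s t := le_min hs1 ht1
      have key := hB (u + v) 2 (by omega) (by omega) (by omega)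
        (fun j => if j ≤ 1 then v else u) (fun j => if j ≤ 1 then max s t else min s t)
        ⟨by intro j hh1 hh2; by_cases h : j ≤ 1 <;> simp [h] <;> omega,
         by intro i j hh1 hh2 hh3; by_cases hi : i ≤ 1 <;> by_cases hj : j ≤ 1 <;>
            simp [hi, hj] <;> omega,
         by rw [sum_Icc_two]; norm_num; omega⟩
        ⟨by intro j hh1 hh2; by_cases h : j ≤ 1 <;> simp [h] <;> omega,
         by intro i j hh1 hh2 hh3; by_cases hi : i ≤ 1 <;> by_cases hj : j ≤ 1 <;>
            simp [hi, hj] <;> omega,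
         by rw [sum_Icc_two]; norm_num [max_add_min] <;> omega⟩
        ⟨by
          intro J hh1 hh2
          have : J = 1 ∨ J = 2 := by omega
          rcases this with rfl | rfl
          · simp [Finset.Icc_self, Finset.sum_singleton]
            omega
          · rw [sum_Icc_two, sum_Icc_two]; norm_num [max_add_min] <;> omega,
         ⟨1, by omega, by omega, by
            norm_num
            have : max s t < v := max_lt hsv' htv
            omega⟩⟩
      rw [prod_Icc_two, prod_Icc_two] at key
      norm_num at key
      have hpos : 0 < W (max s t) * W (min s t) := lt_of_lt_of_le (mul_pos hWv hWu) key
      have hboth : 0 < W (max s t) ∧ 0 < W (min s t) := by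
        rcases mul_pos_iff.mp hpos with h | h
        · exact h
        · exact absurd h.1 (not_lt.mpr (hW _ hmax1))
      rcases le_total s t with h | h
      · have : min s t = s := min_eq_left h
        rw [this] at hboth
        exact hboth.2
      · have : max s t = s := max_eq_left h
        rw [this] at hboth
        exact hboth.1
end

section
/- Let W = (W_s)_{s≥1} be a sequence of strictly positive reals with W_1 = 1, and define the reallocation weight f(s) = W_{s+1}/W_s for s ≥ 1. Then f is nondecreasing on the positive integers if and only if for every n ≥ 1, every 1 ≤ k ≤ n, and all integer partitions 𝐧 ≺ 𝐧' of n into k parts one has ∏_{j=1}^k W_{n_j} ≥ ∏_{j=1}^k W_{n'_j}; and f is nonincreasing on the positive integers if and only if for all such 𝐧 ≺ 𝐧' one has ∏_{j=1}^k W_{n_j} ≤ ∏_{j=1}^k W_{n'_j}. (In a Gibbs partition, f(n_j) is proportional to the probability of reallocating a new datapoint to an existing cluster of size n_j, so f increasing/decreasing characterizes balance-averseness/balance-seekingness.) -/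
open Finset

/-- Telescoping sum of increments. -/
lemma GibbsAux.tel (g : ℕ → ℝ) {p q : ℕ} (h : p ≤ q) :
    ∑ s ∈ Ico p q, (g (s+1) - g s) = g q - g p := by
  rw [Finset.sum_Ico_eq_sub _ h, Finset.sum_range_sub, Finset.sum_range_sub]
  ring

noncomputable def GibbsAux.mySlope (g : ℕ → ℝ) (p q : ℕ) : ℝ :=
  (g q - g p) / ((q : ℝ) - p)

namespace GibbsAux

section
variable (g : ℕ → ℝ) (hg : ∀ s t, 1 ≤ s → s ≤ t → g (s+1) - g s ≤ g (t+1) - g t)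
include hg

lemma sum_upper {u v m : ℕ} (hu : 1 ≤ u) (hm : v ≤ m + 1) :
    ∑ s ∈ Ico u v, (g (s+1) - g s) ≤ ((v - u : ℕ) : ℝ) * (g (m+1) - g m) := by
  calc ∑ s ∈ Ico u v, (g (s+1) - g s) ≤ ∑ s ∈ Ico u v, (g (m+1) - g m) := by
        apply Finset.sum_le_sum
        intro s hs
        simp only [Finset.mem_Ico] at hs
        exact hg s m (le_trans hu hs.1) (by omega)
    _ = ((v - u : ℕ) : ℝ) * (g (m+1) - g m) := by
        rw [Finset.sum_const, Nat.card_Ico]; simp [nsmul_eq_mul]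

lemma sum_lower {u v m : ℕ} (hm1 : 1 ≤ m) (hm : m ≤ u) :
    ((v - u : ℕ) : ℝ) * (g (m+1) - g m) ≤ ∑ s ∈ Ico u v, (g (s+1) - g s) := by
  rcases le_or_gt u v with huv | huv
  · calc ((v - u : ℕ) : ℝ) * (g (m+1) - g m)
        = ∑ s ∈ Ico u v, (g (m+1) - g m) := by
          rw [Finset.sum_const, Nat.card_Ico]; simp [nsmul_eq_mul]
      _ ≤ ∑ s ∈ Ico u v, (g (s+1) - g s) := by
          apply Finset.sum_le_sum
          intro s hs
          simp only [Finset.mem_Ico] at hs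
          exact hg m s hm1 (le_trans hm hs.1)
  · rw [Finset.Ico_eq_empty (by omega)]
    simp [Nat.sub_eq_zero_of_le (le_of_lt huv)]

lemma slope_right {u v w : ℕ} (hu : 1 ≤ u) (huv : u < v) (hvw : v ≤ w) :
    mySlope g u v ≤ mySlope g u w := by
  have hvu : (0:ℝ) < (v:ℝ) - u := by
    have : (u:ℝ) < v := by exact_mod_cast huv
    linarith
  have hwu : (0:ℝ) < (w:ℝ) - u := by
    have : (u:ℝ) < w := by exact_mod_cast lt_of_lt_of_le huv hvw
    linarith
  rw [mySlope, mySlope, div_le_div_iff₀ hvu hwu]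
  have e1 : g v - g u = ∑ s ∈ Ico u v, (g (s+1) - g s) := (tel g huv.le).symm
  have e2 : g w - g v = ∑ s ∈ Ico v w, (g (s+1) - g s) := (tel g hvw).symm
  have e3 : g w - g u = (g w - g v) + (g v - g u) := by ring
  set S1 := ∑ s ∈ Ico u v, (g (s+1) - g s) with hS1
  set S2 := ∑ s ∈ Ico v w, (g (s+1) - g s) with hS2
  have hub : S1 ≤ ((v - u : ℕ) : ℝ) * (g (v-1+1) - g (v-1)) :=
    sum_upper g hg hu (by omega)
  have hlb : ((w - v : ℕ) : ℝ) * (g (v-1+1) - g (v-1)) ≤ S2 :=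
    sum_lower g hg (by omega) (by omega)
  have c1 : ((v - u : ℕ) : ℝ) = (v:ℝ) - u := by
    push_cast [Nat.cast_sub huv.le]; ring
  have c2 : ((w - v : ℕ) : ℝ) = (w:ℝ) - v := by
    push_cast [Nat.cast_sub hvw]; ring
  rw [c1] at hub; rw [c2] at hlb
  have hwv : (0:ℝ) ≤ (w:ℝ) - v := by
    have : (v:ℝ) ≤ w := by exact_mod_cast hvw
    linarith
  rw [e1, e3, e2, e1]
  nlinarith [mul_le_mul_of_nonneg_right hub hwv, mul_le_mul_of_nonneg_left hlb hvu.le]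

lemma slope_left {u v w : ℕ} (hu : 1 ≤ u) (huv : u ≤ v) (hvw : v < w) :
    mySlope g u w ≤ mySlope g v w := by
  have hwu : (0:ℝ) < (w:ℝ) - u := by
    have : (u:ℝ) < w := by exact_mod_cast lt_of_le_of_lt huv hvw
    linarith
  have hwv : (0:ℝ) < (w:ℝ) - v := by
    have : (v:ℝ) < w := by exact_mod_cast hvw
    linarith
  rw [mySlope, mySlope, div_le_div_iff₀ hwu hwv]
  have e1 : g v - g u = ∑ s ∈ Ico u v, (g (s+1) - g s) := (tel g huv).symm
  have e2 : g w - g v = ∑ s ∈ Ico v w, (g (s+1) - g s) := (tel g hvw.le).symm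
  set S1 := ∑ s ∈ Ico u v, (g (s+1) - g s) with hS1
  set S2 := ∑ s ∈ Ico v w, (g (s+1) - g s) with hS2
  have hub : S1 ≤ ((v - u : ℕ) : ℝ) * (g (v+1) - g v) :=
    sum_upper g hg hu (by omega)
  have hlb : ((w - v : ℕ) : ℝ) * (g (v+1) - g v) ≤ S2 :=
    sum_lower g hg (le_trans hu huv) le_rfl
  have c1 : ((v - u : ℕ) : ℝ) = (v:ℝ) - u := by
    push_cast [Nat.cast_sub huv]; ring
  have c2 : ((w - v : ℕ) : ℝ) = (w:ℝ) - v := by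
    push_cast [Nat.cast_sub hvw.le]; ring
  rw [c1] at hub; rw [c2] at hlb
  have hvu : (0:ℝ) ≤ (v:ℝ) - u := by
    have : (u:ℝ) ≤ v := by exact_mod_cast huv
    linarith
  have e3 : g w - g u = S2 + S1 := by rw [← e1, ← e2]; ring
  have e4 : g w - g v = S2 := e2
  rw [e3, e4]
  nlinarith [mul_le_mul_of_nonneg_right hub hwv.le, mul_le_mul_of_nonneg_left hlb hvu]

lemma slope_mono {p' p q' q : ℕ} (hp' : 1 ≤ p') (hpp : p' ≤ p) (h1 : p' < q')
    (h2 : p < q) (hqq : q' ≤ q) : mySlope g p' q' ≤ mySlope g p q :=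
  le_trans (slope_right g hg hp' h1 hqq) (slope_left g hg hp' hpp h2)

end

noncomputable def myC (g : ℕ → ℝ) (p q : ℕ) : ℝ := mySlope g p (max q (p+1))

lemma myC_identity (g : ℕ → ℝ) (u v : ℕ) :
    g u - g v = myC g (min u v) (max u v) * ((u:ℝ) - v) := by
  rcases lt_trichotomy u v with h | h | h
  · have hmin : min u v = u := min_eq_left h.le
    have hmax : max u v = v := max_eq_right h.le
    have hmax2 : max v (u+1) = v := max_eq_left (by omega)
    rw [hmin, hmax, myC, hmax2, mySlope]
    have hne : (v:ℝ) - u ≠ 0 := by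
      have : (u:ℝ) < v := by exact_mod_cast h
      linarith
    field_simp
    ring
  · subst h; simp [myC]
  · have hmin : min u v = v := min_eq_right h.le
    have hmax : max u v = u := max_eq_left h.le
    have hmax2 : max u (v+1) = u := max_eq_left (by omega)
    rw [hmin, hmax, myC, hmax2, mySlope]
    have hne : (u:ℝ) - v ≠ 0 := by
      have : (v:ℝ) < u := by exact_mod_cast h
      linarith
    field_simp

lemma myC_mono (g : ℕ → ℝ) (hg : ∀ s t, 1 ≤ s → s ≤ t → g (s+1) - g s ≤ g (t+1) - g t)
    {p' p q' q : ℕ} (hp' : 1 ≤ p') (hpp : p' ≤ p) (hqq : q' ≤ q) :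
    myC g p' q' ≤ myC g p q :=
  slope_mono g hg hp' hpp (lt_max_iff.2 (Or.inr (by omega)))
    (lt_max_iff.2 (Or.inr (by omega))) (max_le_max hqq (by omega))

/-- Karamata / Schur convexity via Abel summation. -/
lemma schur_key (g : ℕ → ℝ) (hg : ∀ s t, 1 ≤ s → s ≤ t → g (s+1) - g s ≤ g (t+1) - g t)
    (k : ℕ) (hk : 1 ≤ k) (a b : ℕ → ℕ)
    (ha1 : ∀ j, 1 ≤ j → j ≤ k → 1 ≤ a j)
    (ha2 : ∀ i j, 1 ≤ i → i ≤ j → j ≤ k → a j ≤ a i)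
    (hb1 : ∀ j, 1 ≤ j → j ≤ k → 1 ≤ b j)
    (hb2 : ∀ i j, 1 ≤ i → i ≤ j → j ≤ k → b j ≤ b i)
    (hsum : ∑ j ∈ Icc 1 k, a j = ∑ j ∈ Icc 1 k, b j)
    (hmaj : ∀ J, 1 ≤ J → J ≤ k → ∑ j ∈ Icc 1 J, b j ≤ ∑ j ∈ Icc 1 J, a j) :
    ∑ j ∈ Icc 1 k, g (b j) ≤ ∑ j ∈ Icc 1 k, g (a j) := by
  set c : ℕ → ℝ := fun j => myC g (min (a j) (b j)) (max (a j) (b j)) with hc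
  set D : ℕ → ℝ := fun J => ∑ j ∈ Icc 1 J, ((a j : ℝ) - (b j : ℝ)) with hD
  have hDnn : ∀ J, 1 ≤ J → J ≤ k → 0 ≤ D J := by
    intro J h1 h2
    have := hmaj J h1 h2
    have : ((∑ j ∈ Icc 1 J, b j : ℕ) : ℝ) ≤ ((∑ j ∈ Icc 1 J, a j : ℕ) : ℝ) := by
      exact_mod_cast this
    simp only [hD, Finset.sum_sub_distrib]
    push_cast at this ⊢
    linarith
  have hcmono : ∀ J, 1 ≤ J → J + 1 ≤ k → c (J+1) ≤ c J := by
    intro J h1 h2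
    apply myC_mono g hg
    · have := ha1 (J+1) (by omega) h2
      have := hb1 (J+1) (by omega) h2
      omega
    · have := ha2 J (J+1) h1 (by omega) h2
      have := hb2 J (J+1) h1 (by omega) h2
      omega
    · have := ha2 J (J+1) h1 (by omega) h2
      have := hb2 J (J+1) h1 (by omega) h2
      omega
  have habel : ∀ J, 1 ≤ J → J ≤ k →
      c J * D J ≤ ∑ j ∈ Icc 1 J, c j * ((a j : ℝ) - (b j : ℝ)) := by
    intro J h1 h2
    induction J with
    | zero => omega
    | succ J ih =>
      rcases Nat.eq_or_lt_of_le h1 with h | h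
      · have hJ : J = 0 := by omega
        subst hJ
        simp [hD]
      · have hJ1 : 1 ≤ J := by omega
        have hJk : J ≤ k := by omega
        have ihh := ih hJ1 hJk
        have hstep : Finset.Icc 1 (J+1) = insert (J+1) (Finset.Icc 1 J) := by
          exact (Finset.insert_Icc_right_eq_Icc_add_one (by omega)).symm
        have hDstep : D (J+1) = D J + ((a (J+1) : ℝ) - (b (J+1) : ℝ)) := by
          simp only [hD, hstep]
          rw [Finset.sum_insert (by simp)]
          ring
        rw [hstep, Finset.sum_insert (by simp)]
        have h3 : c (J+1) ≤ c J := hcmono J hJ1 h2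
        have h4 : 0 ≤ D J := hDnn J hJ1 hJk
        have : c (J+1) * D J ≤ c J * D J := mul_le_mul_of_nonneg_right h3 h4
        calc c (J+1) * D (J+1)
            = c (J+1) * ((a (J+1) : ℝ) - (b (J+1) : ℝ)) + c (J+1) * D J := by
              rw [hDstep]; ring
          _ ≤ c (J+1) * ((a (J+1) : ℝ) - (b (J+1) : ℝ)) + c J * D J := by linarith
          _ ≤ _ := by linarith
  have hDk : D k = 0 := by
    simp only [hD, Finset.sum_sub_distrib]
    have h := congrArg (fun x : ℕ => (x:ℝ)) hsum
    push_cast at h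
    linarith
  have hmain := habel k hk le_rfl
  rw [hDk, mul_zero] at hmain
  have hident : ∑ j ∈ Icc 1 k, (g (a j) - g (b j))
      = ∑ j ∈ Icc 1 k, c j * ((a j : ℝ) - (b j : ℝ)) := by
    apply Finset.sum_congr rfl
    intro j _
    exact myC_identity g (a j) (b j)
  have : 0 ≤ ∑ j ∈ Icc 1 k, (g (a j) - g (b j)) := by
    rw [hident]; exact hmain
  rw [Finset.sum_sub_distrib] at this
  linarith

lemma prod_le_prod_of_log (k : ℕ) (u v : ℕ → ℝ)
    (hu : ∀ j ∈ Icc 1 k, 0 < u j) (hv : ∀ j ∈ Icc 1 k, 0 < v j)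
    (h : ∑ j ∈ Icc 1 k, Real.log (u j) ≤ ∑ j ∈ Icc 1 k, Real.log (v j)) :
    ∏ j ∈ Icc 1 k, u j ≤ ∏ j ∈ Icc 1 k, v j := by
  have hpu : 0 < ∏ j ∈ Icc 1 k, u j := Finset.prod_pos hu
  have hpv : 0 < ∏ j ∈ Icc 1 k, v j := Finset.prod_pos hv
  rw [← Real.log_le_log_iff hpu hpv]
  rw [Real.log_prod (fun j hj => (hu j hj).ne'),
    Real.log_prod (fun j hj => (hv j hj).ne')]
  exact h

end GibbsAux

namespace GibbsAux

/-- The two-part partitions witnessing the converse direction. -/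
lemma two_part (s t : ℕ) (hs : 1 ≤ s) (hst : s < t) :
    IsIntegerPartition (s + t + 1) 2 (fun j => if j = 1 then t + 1 else s) ∧
    IsIntegerPartition (s + t + 1) 2 (fun j => if j = 1 then t else s + 1) ∧
    MoreBalanced 2 (fun j => if j = 1 then t + 1 else s)
      (fun j => if j = 1 then t else s + 1) := by
  have hIcc : Finset.Icc 1 2 = {1, 2} := by decide
  have hIcc1 : Finset.Icc 1 1 = {1} := by decide
  refine ⟨⟨?_, ?_, ?_⟩, ⟨?_, ?_, ?_⟩, ?_, ?_⟩
  · intro j h1 h2; interval_cases j <;> beta_reduce <;> split_ifs <;> omega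
  · intro i j h1 h2 h3; interval_cases j <;> interval_cases i <;> beta_reduce <;> split_ifs <;> omega
  · rw [hIcc, Finset.sum_pair (by decide)]; beta_reduce; split_ifs <;> omega
  · intro j h1 h2; interval_cases j <;> beta_reduce <;> split_ifs <;> omega
  · intro i j h1 h2 h3; interval_cases j <;> interval_cases i <;> beta_reduce <;> split_ifs <;> omega
  · rw [hIcc, Finset.sum_pair (by decide)]; beta_reduce; split_ifs <;> omega
  · intro J h1 h2; interval_cases J
    · rw [hIcc1, Finset.sum_singleton, Finset.sum_singleton]
      beta_reduce; split_ifs <;> omega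
    · rw [hIcc, Finset.sum_pair (by decide), Finset.sum_pair (by decide)]
      beta_reduce; split_ifs <;> omega
  · refine ⟨1, le_rfl, by omega, ?_⟩
    show (if 1 = 1 then t + 1 else s) ≠ (if 1 = 1 then t else s + 1)
    split_ifs <;> omega

end GibbsAux

/-- The reallocation weight `f(s) = W_{s+1}/W_s` is nondecreasing iff the Gibbs
partition with weights `W` is balance-averse, and nonincreasing iff it is
balance-seeking. -/
theorem reallocation_monotone_iff_balancedness
    (W : ℕ → ℝ) (hW : ∀ s, 1 ≤ s → 0 < W s) (hW1 : W 1 = 1) :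
    ((∀ s t : ℕ, 1 ≤ s → s ≤ t → W (s + 1) / W s ≤ W (t + 1) / W t) ↔
      (∀ n k : ℕ, 1 ≤ n → 1 ≤ k → k ≤ n →
        ∀ a b : ℕ → ℕ, IsIntegerPartition n k a → IsIntegerPartition n k b →
          MoreBalanced k a b →
          ∏ j ∈ Finset.Icc 1 k, W (b j) ≤ ∏ j ∈ Finset.Icc 1 k, W (a j))) ∧
    ((∀ s t : ℕ, 1 ≤ s → s ≤ t → W (t + 1) / W t ≤ W (s + 1) / W s) ↔
      (∀ n k : ℕ, 1 ≤ n → 1 ≤ k → k ≤ n →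
        ∀ a b : ℕ → ℕ, IsIntegerPartition n k a → IsIntegerPartition n k b →
          MoreBalanced k a b →
          ∏ j ∈ Finset.Icc 1 k, W (a j) ≤ ∏ j ∈ Finset.Icc 1 k, W (b j))) := by
  -- generic facts
  have hlogdiff : ∀ s : ℕ, 1 ≤ s →
      Real.log (W (s+1)) - Real.log (W s) = Real.log (W (s+1) / W s) := by
    intro s hs
    rw [Real.log_div (hW (s+1) (by omega)).ne' (hW s hs).ne']
  have hdivpos : ∀ s : ℕ, 1 ≤ s → 0 < W (s+1) / W s := by
    intro s hs
    exact div_pos (hW (s+1) (by omega)) (hW s hs)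
  constructor
  · constructor
    · -- f nondecreasing ⇒ balance-averse
      intro hf n k hn hk hkn a b ha hb hab
      obtain ⟨ha1, ha2, ha3⟩ := ha
      obtain ⟨hb1, hb2, hb3⟩ := hb
      obtain ⟨hmaj, _⟩ := hab
      set g : ℕ → ℝ := fun s => Real.log (W s) with hgdef
      have hg : ∀ s t, 1 ≤ s → s ≤ t → g (s+1) - g s ≤ g (t+1) - g t := by
        intro s t hs hst
        simp only [hgdef]
        rw [hlogdiff s hs, hlogdiff t (le_trans hs hst)]
        exact Real.log_le_log (hdivpos s hs) (hf s t hs hst)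
      have key := GibbsAux.schur_key g hg k hk a b ha1 ha2 hb1 hb2
        (by rw [ha3, hb3]) hmaj
      exact GibbsAux.prod_le_prod_of_log k (fun j => W (b j)) (fun j => W (a j))
        (fun j hj => hW (b j) (hb1 j (Finset.mem_Icc.1 hj).1 (Finset.mem_Icc.1 hj).2))
        (fun j hj => hW (a j) (ha1 j (Finset.mem_Icc.1 hj).1 (Finset.mem_Icc.1 hj).2))
        key
    · -- balance-averse ⇒ f nondecreasing
      intro hbal s t hs hst
      rcases Nat.eq_or_lt_of_le hst with h | h
      · subst h; exact le_rfl
      · obtain ⟨hpa, hpb, hmb⟩ := GibbsAux.two_part s t hs h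
        have hres := hbal (s + t + 1) 2 (by omega) (by omega) (by omega) _ _ hpa hpb hmb
        have hIcc : Finset.Icc 1 2 = ({1, 2} : Finset ℕ) := by decide
        rw [hIcc, Finset.prod_pair (by decide), Finset.prod_pair (by decide)] at hres
        norm_num at hres
        -- hres : W t * W (s+1) ≤ W (t+1) * W s
        rw [div_le_div_iff₀ (hW s hs) (hW t (by omega))]
        nlinarith [hW s hs, hW t (by omega : 1 ≤ t)]
  · constructor
    · -- f nonincreasing ⇒ balance-seeking
      intro hf n k hn hk hkn a b ha hb hab
      obtain ⟨ha1, ha2, ha3⟩ := ha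
      obtain ⟨hb1, hb2, hb3⟩ := hb
      obtain ⟨hmaj, _⟩ := hab
      set g : ℕ → ℝ := fun s => -Real.log (W s) with hgdef
      have hg : ∀ s t, 1 ≤ s → s ≤ t → g (s+1) - g s ≤ g (t+1) - g t := by
        intro s t hs hst
        simp only [hgdef]
        have : Real.log (W (t+1)) - Real.log (W t)
            ≤ Real.log (W (s+1)) - Real.log (W s) := by
          rw [hlogdiff s hs, hlogdiff t (le_trans hs hst)]
          exact Real.log_le_log (hdivpos t (le_trans hs hst)) (hf s t hs hst)
        linarith
      have key := GibbsAux.schur_key g hg k hk a b ha1 ha2 hb1 hb2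
        (by rw [ha3, hb3]) hmaj
      simp only [hgdef] at key
      rw [Finset.sum_neg_distrib, Finset.sum_neg_distrib, neg_le_neg_iff] at key
      exact GibbsAux.prod_le_prod_of_log k (fun j => W (a j)) (fun j => W (b j))
        (fun j hj => hW (a j) (ha1 j (Finset.mem_Icc.1 hj).1 (Finset.mem_Icc.1 hj).2))
        (fun j hj => hW (b j) (hb1 j (Finset.mem_Icc.1 hj).1 (Finset.mem_Icc.1 hj).2))
        key
    · -- balance-seeking ⇒ f nonincreasing
      intro hbal s t hs hst
      rcases Nat.eq_or_lt_of_le hst with h | h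
      · subst h; exact le_rfl
      · obtain ⟨hpa, hpb, hmb⟩ := GibbsAux.two_part s t hs h
        have hres := hbal (s + t + 1) 2 (by omega) (by omega) (by omega) _ _ hpa hpb hmb
        have hIcc : Finset.Icc 1 2 = ({1, 2} : Finset ℕ) := by decide
        rw [hIcc, Finset.prod_pair (by decide), Finset.prod_pair (by decide)] at hres
        norm_num at hres
        -- hres : W (t+1) * W s ≤ W t * W (s+1)
        rw [div_le_div_iff₀ (hW t (by omega)) (hW s hs)]
        nlinarith [hW s hs, hW t (by omega : 1 ≤ t)]
end

section
/- Fix a real σ < 1. For every n ≥ 1, every 1 ≤ k ≤ n, and every pair of integer partitions 𝐧 = (n_1,…,n_k) and 𝐧' = (n'_1,…,n'_k) of n into k parts with 𝐧 ≺ 𝐧', one has ∏_{j=1}^k Γ(n_j − σ) > ∏_{j=1}^k Γ(n'_j − σ). (This is the statement that every infinitely exchangeable Gibbs partition with exponent σ ∈ (−∞,1), whose weights are W_s = Γ(s−σ)/Γ(1−σ), is strictly balance-averse: it assigns strictly larger probability to the less balanced of two comparable integer partitions with the same number of clusters.) -/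
namespace GibbsAux

noncomputable def g (σ : ℝ) (m : ℕ) : ℝ := Real.log (Real.Gamma ((m : ℝ) - σ))

lemma pos_arg {σ : ℝ} (hσ : σ < 1) {m : ℕ} (hm : 1 ≤ m) : 0 < (m : ℝ) - σ := by
  have : (1 : ℝ) ≤ m := by exact_mod_cast hm
  linarith

lemma gamma_pos {σ : ℝ} (hσ : σ < 1) {m : ℕ} (hm : 1 ≤ m) :
    0 < Real.Gamma ((m : ℝ) - σ) :=
  Real.Gamma_pos_of_pos (pos_arg hσ hm)

lemma g_step {σ : ℝ} (hσ : σ < 1) {m : ℕ} (hm : 1 ≤ m) :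
    g σ (m + 1) = g σ m + Real.log ((m : ℝ) - σ) := by
  have h : ((m + 1 : ℕ) : ℝ) - σ = ((m : ℝ) - σ) + 1 := by push_cast; ring
  rw [g, g, h, Real.Gamma_add_one (ne_of_gt (pos_arg hσ hm)),
    Real.log_mul (ne_of_gt (pos_arg hσ hm)) (ne_of_gt (gamma_pos hσ hm))]
  ring

lemma keyA {σ : ℝ} (hσ : σ < 1) {v m : ℕ} (hv : 1 ≤ v) (hvm : v ≤ m) :
    ((m : ℝ) - v) * Real.log ((v : ℝ) - σ) ≤ g σ m - g σ v := by
  induction m, hvm using Nat.le_induction with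
  | base => simp
  | succ m hm ih =>
    have h1 : 1 ≤ m := le_trans hv hm
    have hlog : Real.log ((v : ℝ) - σ) ≤ Real.log ((m : ℝ) - σ) := by
      apply Real.log_le_log (pos_arg hσ hv)
      have : (v : ℝ) ≤ m := by exact_mod_cast hm
      linarith
    rw [g_step hσ h1]
    have hc : ((m + 1 : ℕ) : ℝ) = (m : ℝ) + 1 := by push_cast; ring
    rw [hc]
    nlinarith [ih]

lemma keyB {σ : ℝ} (hσ : σ < 1) {m v : ℕ} (hm : 1 ≤ m) (hmv : m < v) :
    g σ v - g σ m ≤ ((v : ℝ) - m) * Real.log (((v : ℝ) - 1) - σ) := by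
  induction v, hmv using Nat.le_induction with
  | base =>
    rw [g_step hσ hm]
    have hc : ((m + 1 : ℕ) : ℝ) = (m : ℝ) + 1 := by push_cast; ring
    rw [hc]
    ring_nf
    simp
  | succ v hv ih =>
    have h1 : 1 ≤ v := le_trans hm (Nat.le_of_succ_le hv)
    have hlog : Real.log (((v : ℝ) - 1) - σ) ≤ Real.log ((v : ℝ) - σ) := by
      apply Real.log_le_log
      · have : ((m : ℝ)) + 1 ≤ v := by exact_mod_cast hv
        have : (1 : ℝ) ≤ m := by exact_mod_cast hm
        linarith [(by exact_mod_cast hv : (m : ℝ) + 1 ≤ (v : ℝ))]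
      · linarith
    rw [g_step hσ h1]
    have hc : ((v + 1 : ℕ) : ℝ) = (v : ℝ) + 1 := by push_cast; ring
    rw [hc]
    have hvm : (m : ℝ) ≤ v := by
      exact_mod_cast Nat.le_of_succ_le hv
    have hsimp : (v : ℝ) + 1 - 1 - σ = (v : ℝ) - σ := by ring
    rw [hsimp]
    nlinarith [ih, mul_le_mul_of_nonneg_left hlog (by linarith : (0:ℝ) ≤ (v : ℝ) - m)]

lemma keyStrict {σ : ℝ} (hσ : σ < 1) {m v : ℕ} (hm : 1 ≤ m) (hmv : m < v) :
    g σ v - g σ m < ((v : ℝ) - m) * Real.log ((v : ℝ) - σ) := by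
  have h2 : 2 ≤ v := by omega
  have h2' : (2 : ℝ) ≤ v := by exact_mod_cast h2
  have hvm : (m : ℝ) < v := by exact_mod_cast hmv
  have hlog : Real.log (((v : ℝ) - 1) - σ) < Real.log ((v : ℝ) - σ) := by
    apply Real.log_lt_log (by linarith) (by linarith)
  have := keyB hσ hm hmv
  nlinarith

/-- The key convexity inequality: `log(v-σ) * (m - v) ≤ g m - g v`. -/
lemma key {σ : ℝ} (hσ : σ < 1) {m v : ℕ} (hm : 1 ≤ m) (hv : 1 ≤ v) :
    Real.log ((v : ℝ) - σ) * ((m : ℝ) - v) ≤ g σ m - g σ v := by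
  rcases le_or_gt v m with h | h
  · have := keyA hσ hv h; linarith
  · have := keyStrict hσ hm h; nlinarith

lemma key_strict {σ : ℝ} (hσ : σ < 1) {m v : ℕ} (hm : 1 ≤ m) (hmv : m < v) :
    Real.log ((v : ℝ) - σ) * ((m : ℝ) - v) < g σ m - g σ v := by
  have := keyStrict hσ hm hmv; nlinarith

/-- Abel summation lower bound. -/
lemma abel (s c : ℕ → ℝ) (k : ℕ)
    (hs : ∀ i j, 1 ≤ i → i ≤ j → j ≤ k → s j ≤ s i)
    (hD : ∀ J, J ≤ k → 0 ≤ ∑ j ∈ Finset.Icc 1 J, c j) :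
    ∀ m, m ≤ k → s m * (∑ j ∈ Finset.Icc 1 m, c j) ≤ ∑ j ∈ Finset.Icc 1 m, s j * c j := by
  intro m
  induction m with
  | zero => simp
  | succ m ih =>
    intro hm
    have hm' : m ≤ k := by omega
    rw [Finset.sum_Icc_succ_top (by omega : 1 ≤ m + 1),
      Finset.sum_Icc_succ_top (by omega : 1 ≤ m + 1), mul_add]
    rcases Nat.eq_zero_or_pos m with h0 | h0
    · subst h0; simp
    · have hsm : s (m + 1) ≤ s m := hs m (m + 1) h0 (by omega) hm
      have hDm : 0 ≤ ∑ j ∈ Finset.Icc 1 m, c j := hD m hm'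
      have h1 := ih hm'
      nlinarith [mul_le_mul_of_nonneg_right hsm hDm]

end GibbsAux

/-- Every infinitely exchangeable Gibbs partition with exponent `σ ∈ (−∞, 1)`,
whose weights are `W_s = Γ(s−σ)/Γ(1−σ)`, is strictly balance-averse: if
`a ≺ b` then the product of Gamma weights of `b` is strictly smaller. -/
theorem gibbs_gamma_strictly_balance_averse
    (σ : ℝ) (hσ : σ < 1) (n k : ℕ) (hn : 1 ≤ n) (hk : 1 ≤ k) (hkn : k ≤ n)
    (a b : ℕ → ℕ) (ha : IsIntegerPartition n k a) (hb : IsIntegerPartition n k b)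
    (hab : MoreBalanced k a b) :
    ∏ j ∈ Finset.Icc 1 k, Real.Gamma ((b j : ℝ) - σ) <
      ∏ j ∈ Finset.Icc 1 k, Real.Gamma ((a j : ℝ) - σ) := by
  classical
  obtain ⟨ha1, ha2, ha3⟩ := ha
  obtain ⟨hb1, hb2, hb3⟩ := hb
  obtain ⟨hmaj, j0, hj01, hj0k, hj0ne⟩ := hab
  set c : ℕ → ℝ := fun j => (a j : ℝ) - (b j : ℝ) with hc
  set s : ℕ → ℝ := fun j => Real.log ((b j : ℝ) - σ) with hs
  -- partial sums of c are nonneg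
  have hD : ∀ J, J ≤ k → 0 ≤ ∑ j ∈ Finset.Icc 1 J, c j := by
    intro J hJ
    rcases Nat.eq_zero_or_pos J with h0 | h0
    · subst h0; simp
    · have := hmaj J h0 hJ
      have hcast : ((∑ j ∈ Finset.Icc 1 J, b j : ℕ) : ℝ) ≤
          ((∑ j ∈ Finset.Icc 1 J, a j : ℕ) : ℝ) := by exact_mod_cast this
      push_cast at hcast
      simp only [hc, Finset.sum_sub_distrib]
      linarith
  -- total sum of c is zero
  have hDk : ∑ j ∈ Finset.Icc 1 k, c j = 0 := by
    simp only [hc, Finset.sum_sub_distrib]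
    have h1 : ((∑ j ∈ Finset.Icc 1 k, a j : ℕ) : ℝ) = (n : ℝ) := by exact_mod_cast ha3
    have h2 : ((∑ j ∈ Finset.Icc 1 k, b j : ℕ) : ℝ) = (n : ℝ) := by exact_mod_cast hb3
    push_cast at h1 h2
    linarith
  -- s is antitone
  have hsmono : ∀ i j, 1 ≤ i → i ≤ j → j ≤ k → s j ≤ s i := by
    intro i j hi hij hjk
    simp only [hs]
    apply Real.log_le_log (GibbsAux.pos_arg hσ (hb1 j (le_trans hi hij) hjk))
    have : (b j : ℝ) ≤ b i := by exact_mod_cast hb2 i j hi hij hjk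
    linarith
  -- Abel: ∑ s j * c j ≥ 0
  have habel : 0 ≤ ∑ j ∈ Finset.Icc 1 k, s j * c j := by
    have := GibbsAux.abel s c k hsmono hD k le_rfl
    rw [hDk, mul_zero] at this
    exact this
  -- exists j with a j < b j
  have hex : ∃ j ∈ Finset.Icc 1 k, a j < b j := by
    by_contra h
    push_neg at h
    have hle : ∀ j ∈ Finset.Icc 1 k, b j ≤ a j := by
      intro j hj; exact h j hj
    have hsum : ∑ j ∈ Finset.Icc 1 k, b j = ∑ j ∈ Finset.Icc 1 k, a j := by
      rw [ha3, hb3]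
    have heq := (Finset.sum_eq_sum_iff_of_le hle).mp hsum
    exact hj0ne (heq j0 (Finset.mem_Icc.mpr ⟨hj01, hj0k⟩)).symm
  -- pointwise inequality and strict sum comparison
  have hpt : ∀ j ∈ Finset.Icc 1 k, GibbsAux.g σ (b j) + s j * c j ≤ GibbsAux.g σ (a j) := by
    intro j hj
    rw [Finset.mem_Icc] at hj
    have := GibbsAux.key hσ (ha1 j hj.1 hj.2) (hb1 j hj.1 hj.2) (σ := σ)
    simp only [hs, hc]
    linarith
  obtain ⟨j1, hj1mem, hj1lt⟩ := hex
  have hj1 := Finset.mem_Icc.mp hj1mem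
  have hptstrict : GibbsAux.g σ (b j1) + s j1 * c j1 < GibbsAux.g σ (a j1) := by
    have := GibbsAux.key_strict hσ (ha1 j1 hj1.1 hj1.2) hj1lt (σ := σ)
    simp only [hs, hc]
    linarith
  have hsumlt : ∑ j ∈ Finset.Icc 1 k, (GibbsAux.g σ (b j) + s j * c j) <
      ∑ j ∈ Finset.Icc 1 k, GibbsAux.g σ (a j) :=
    Finset.sum_lt_sum hpt ⟨j1, hj1mem, hptstrict⟩
  rw [Finset.sum_add_distrib] at hsumlt
  have hfinal : ∑ j ∈ Finset.Icc 1 k, GibbsAux.g σ (b j) <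
      ∑ j ∈ Finset.Icc 1 k, GibbsAux.g σ (a j) := by linarith
  -- convert to products
  have hbpos : ∀ j ∈ Finset.Icc 1 k, 0 < Real.Gamma ((b j : ℝ) - σ) := by
    intro j hj; rw [Finset.mem_Icc] at hj
    exact GibbsAux.gamma_pos hσ (hb1 j hj.1 hj.2)
  have hapos : ∀ j ∈ Finset.Icc 1 k, 0 < Real.Gamma ((a j : ℝ) - σ) := by
    intro j hj; rw [Finset.mem_Icc] at hj
    exact GibbsAux.gamma_pos hσ (ha1 j hj.1 hj.2)
  have hlogb : Real.log (∏ j ∈ Finset.Icc 1 k, Real.Gamma ((b j : ℝ) - σ)) =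
      ∑ j ∈ Finset.Icc 1 k, GibbsAux.g σ (b j) := by
    rw [Real.log_prod (fun j hj => ne_of_gt (hbpos j hj))]
    rfl
  have hloga : Real.log (∏ j ∈ Finset.Icc 1 k, Real.Gamma ((a j : ℝ) - σ)) =
      ∑ j ∈ Finset.Icc 1 k, GibbsAux.g σ (a j) := by
    rw [Real.log_prod (fun j hj => ne_of_gt (hapos j hj))]
    rfl
  have hPb : 0 < ∏ j ∈ Finset.Icc 1 k, Real.Gamma ((b j : ℝ) - σ) :=
    Finset.prod_pos hbpos
  have hPa : 0 < ∏ j ∈ Finset.Icc 1 k, Real.Gamma ((a j : ℝ) - σ) :=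
    Finset.prod_pos hapos
  have := hfinal
  rw [← hlogb, ← hloga] at this
  exact (Real.log_lt_log_iff hPb hPa).mp this
end

section
/- Let (Θ, 𝒜, ν) be a measure space, and for each ϑ ∈ Θ let V_{n,k}(ϑ) ≥ 0 and W_s(ϑ) ≥ 0 (s ≥ 1) be measurable in ϑ. Suppose that for every ϑ the sequence (W_s(ϑ))_{s≥1} is log-convex, i.e. W_s(ϑ)² ≤ W_{s−1}(ϑ)W_{s+1}(ϑ) for all s ≥ 2. Then for every n ≥ 1, every 1 ≤ k ≤ n, and all integer partitions 𝐧 ≺ 𝐧' of n into k parts, the mixture EPPF satisfies ∫ V_{n,k}(ϑ)∏_{j=1}^k W_{n_j}(ϑ) ν(dϑ) ≥ ∫ V_{n,k}(ϑ)∏_{j=1}^k W_{n'_j}(ϑ) ν(dϑ), where the integrals are Lebesgue integrals of nonnegative functions. Analogously, if for every ϑ the sequence (W_s(ϑ)) is log-concave (W_s(ϑ)² ≥ W_{s−1}(ϑ)W_{s+1}(ϑ) for all s ≥ 2 with no internal zeros), then the reverse inequality ∫ V_{n,k}∏ W_{n_j} dν ≤ ∫ V_{n,k}∏ W_{n'_j}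 dν holds. (A mixture of Gibbs partitions is balance-averse if each mixed weight sequence is log-convex and balance-seeking if each is log-concave.) -/
open MeasureTheory Finset

def StepTo (k : ℕ) (a a' : ℕ → ℕ) : Prop :=
  ∃ i j, 1 ≤ i ∧ i ≤ k ∧ 1 ≤ j ∧ j ≤ k ∧ i ≠ j ∧ (∀ t, 1 ≤ t → t ≤ k → 1 ≤ a t) ∧
    a j + 2 ≤ a i ∧ a' i = a i - 1 ∧ a' j = a j + 1 ∧ ∀ t, t ≠ i → t ≠ j → a' t = a t


lemma convex_transfer (W : ℕ → ℝ) (hnn : ∀ s, 1 ≤ s → 0 ≤ W s)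
    (hlc : ∀ s, 2 ≤ s → W s ^ 2 ≤ W (s-1) * W (s+1)) :
    ∀ y x, 1 ≤ y → y + 2 ≤ x → W (x-1) * W (y+1) ≤ W x * W y := by
  intro y x hy hx
  induction x, hx using Nat.le_induction with
  | base =>
    have h := hlc (y+1) (by omega)
    have h1 : y + 2 - 1 = y + 1 := by omega
    have h2 : y + 1 - 1 = y := by omega
    rw [h1]
    rw [h2] at h
    nlinarith [h]
  | succ x hx ih =>
    have hxy : x + 1 - 1 = x := by omega
    rw [hxy]
    rcases eq_or_lt_of_le (hnn x (by omega)) with h0 | hpos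
    · have : W x * W (y+1) = 0 := by rw [← h0]; ring
      rw [this]
      exact mul_nonneg (hnn (x+1) (by omega)) (hnn y hy)
    · have h2 := hlc x (by omega)
      have ha := mul_le_mul_of_nonneg_right h2 (hnn (y+1) (by omega))
      have hb := mul_le_mul_of_nonneg_left ih (hnn (x+1) (by omega))
      nlinarith [ha, hb, hpos]




lemma concave_transfer (W : ℕ → ℝ) (hnn : ∀ s, 1 ≤ s → 0 ≤ W s)
    (hlc : ∀ s, 2 ≤ s → W (s-1) * W (s+1) ≤ W s ^ 2) (hniz : NoInternalZeros W) :
    ∀ y x, 1 ≤ y → y + 2 ≤ x → W x * W y ≤ W (x-1) * W (y+1) := by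
  intro y x hy hx
  induction x, hx using Nat.le_induction with
  | base =>
    have h := hlc (y+1) (by omega)
    have h1 : y + 2 - 1 = y + 1 := by omega
    have h2 : y + 1 - 1 = y := by omega
    rw [h1]
    rw [h2] at h
    nlinarith [h]
  | succ x hx ih =>
    have hxy : x + 1 - 1 = x := by omega
    rw [hxy]
    rcases eq_or_lt_of_le (hnn (x+1) (by omega)) with h0 | hpos
    · have : W (x+1) * W y = 0 := by rw [← h0]; ring
      rw [this]
      exact mul_nonneg (hnn x (by omega)) (hnn (y+1) (by omega))
    rcases eq_or_lt_of_le (hnn y hy) with h0 | hposy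
    · have : W (x+1) * W y = 0 := by rw [← h0]; ring
      rw [this]
      exact mul_nonneg (hnn x (by omega)) (hnn (y+1) (by omega))
    have hposx : 0 < W x := hniz y x (x+1) hy (by omega) (by omega) hposy hpos
    have h2 := hlc x (by omega)
    have ha := mul_le_mul_of_nonneg_right h2 (hnn (y+1) (by omega))
    have hb := mul_le_mul_of_nonneg_left ih (hnn (x+1) (by omega))
    nlinarith [ha, hb, hposx]



lemma prod_split {M : Type*} [CommMonoid M] (k i j : ℕ) (hi : i ∈ Icc 1 k) (hj : j ∈ Icc 1 k)
    (hij : i ≠ j) (f : ℕ → M) :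
    ∏ t ∈ Icc 1 k, f t = f i * (f j * ∏ t ∈ ((Icc 1 k).erase i).erase j, f t) := by
  symm
  rw [Finset.mul_prod_erase _ f (Finset.mem_erase.mpr ⟨hij.symm, hj⟩),
      Finset.mul_prod_erase _ f hi]

lemma step_prods (W : ℕ → ℝ) (hnn : ∀ s, 1 ≤ s → 0 ≤ W s) {k : ℕ} {a a' : ℕ → ℕ}
    (h : StepTo k a a') :
    ∃ x y C, 1 ≤ y ∧ y + 2 ≤ x ∧ 0 ≤ C ∧
      (∏ t ∈ Icc 1 k, W (a t)) = W x * W y * C ∧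
      (∏ t ∈ Icc 1 k, W (a' t)) = W (x-1) * W (y+1) * C := by
  obtain ⟨i, j, hi1, hik, hj1, hjk, hij, hpos, hgap, hai, haj, hother⟩ := h
  have hiI : i ∈ Icc 1 k := by simp [mem_Icc]; omega
  have hjI : j ∈ Icc 1 k := by simp [mem_Icc]; omega
  refine ⟨a i, a j, ∏ t ∈ ((Icc 1 k).erase i).erase j, W (a t), hpos j hj1 hjk, hgap, ?_, ?_, ?_⟩
  · apply Finset.prod_nonneg
    intro t ht
    have ht' := Finset.mem_of_mem_erase (Finset.mem_of_mem_erase ht)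
    rw [mem_Icc] at ht'
    exact hnn (a t) (hpos t ht'.1 ht'.2)
  · rw [prod_split k i j hiI hjI hij]; ring
  · rw [prod_split k i j hiI hjI hij (fun t => W (a' t))]
    have he : ∏ t ∈ ((Icc 1 k).erase i).erase j, W (a' t)
        = ∏ t ∈ ((Icc 1 k).erase i).erase j, W (a t) := by
      apply Finset.prod_congr rfl
      intro t ht
      rw [hother t (Finset.ne_of_mem_erase (Finset.mem_of_mem_erase ht))
        (Finset.ne_of_mem_erase ht)]
    rw [he, hai, haj]
    ring

lemma chain_prod_le (W : ℕ → ℝ) (hnn : ∀ s, 1 ≤ s → 0 ≤ W s)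
    (htr : ∀ y x, 1 ≤ y → y + 2 ≤ x → W (x-1) * W (y+1) ≤ W x * W y)
    {k : ℕ} {a c : ℕ → ℕ} (h : Relation.ReflTransGen (StepTo k) a c) :
    ∏ t ∈ Icc 1 k, W (c t) ≤ ∏ t ∈ Icc 1 k, W (a t) := by
  induction h with
  | refl => exact le_refl _
  | tail hac hstep ih =>
    refine le_trans ?_ ih
    obtain ⟨x, y, C, hy, hx, hC, hA, hA'⟩ := step_prods W hnn hstep
    rw [hA, hA']
    exact mul_le_mul_of_nonneg_right (htr y x hy hx) hC

lemma chain_prod_ge (W : ℕ → ℝ) (hnn : ∀ s, 1 ≤ s → 0 ≤ W s)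
    (htr : ∀ y x, 1 ≤ y → y + 2 ≤ x → W x * W y ≤ W (x-1) * W (y+1))
    {k : ℕ} {a c : ℕ → ℕ} (h : Relation.ReflTransGen (StepTo k) a c) :
    ∏ t ∈ Icc 1 k, W (a t) ≤ ∏ t ∈ Icc 1 k, W (c t) := by
  induction h with
  | refl => exact le_refl _
  | tail hac hstep ih =>
    refine le_trans ih ?_
    obtain ⟨x, y, C, hy, hx, hC, hA, hA'⟩ := step_prods W hnn hstep
    rw [hA, hA']
    exact mul_le_mul_of_nonneg_right (htr y x hy hx) hC




def S (f : ℕ → ℕ) (J : ℕ) : ℕ := ∑ t ∈ Finset.Icc 1 J, f t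

lemma S_def (f : ℕ → ℕ) (J : ℕ) : S f J = ∑ t ∈ Finset.Icc 1 J, f t := rfl

lemma ssum_split (K i j : ℕ) (hi : i ∈ Icc 1 K) (hj : j ∈ Icc 1 K)
    (hij : i ≠ j) (f : ℕ → ℕ) :
    ∑ t ∈ Icc 1 K, f t = f i + (f j + ∑ t ∈ ((Icc 1 K).erase i).erase j, f t) := by
  symm
  rw [Finset.add_sum_erase _ f (Finset.mem_erase.mpr ⟨hij.symm, hj⟩),
      Finset.add_sum_erase _ f hi]

lemma S_split (f : ℕ → ℕ) {i J : ℕ} (h : i ≤ J) :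
    S f J = S f i + ∑ t ∈ Ioc i J, f t := by
  have hu : Icc 1 J = Icc 1 i ∪ Ioc i J := by
    ext t; simp only [mem_Icc, mem_Ioc, mem_union]; omega
  have hd : Disjoint (Icc 1 i) (Ioc i J) := by
    rw [Finset.disjoint_left]
    intro t ht ht'
    rw [mem_Icc] at ht; rw [mem_Ioc] at ht'
    omega
  rw [S_def, S_def, hu, Finset.sum_union hd]

lemma S_top (f : ℕ → ℕ) {J : ℕ} (h : 1 ≤ J) : S f J = S f (J-1) + f J := by
  have h2 : J - 1 ≤ J := by omega
  rw [S_split f h2]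
  have : Ioc (J-1) J = {J} := by
    ext t; simp only [mem_Ioc, mem_singleton]; omega
  rw [this, Finset.sum_singleton]

lemma exists_chain (n k : ℕ) (b : ℕ → ℕ) (hb : IsIntegerPartition n k b) :
    ∀ N, ∀ a : ℕ → ℕ, IsIntegerPartition n k a →
      (∀ J, 1 ≤ J → J ≤ k → S b J ≤ S a J) →
      (∑ J ∈ Icc 1 k, (S a J - S b J)) ≤ N →
      ∃ c, Relation.ReflTransGen (StepTo k) a c ∧ ∀ t, 1 ≤ t → t ≤ k → c t = b t := by
  intro N
  induction N with
  | zero =>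
    intro a ha hdom hM
    refine ⟨a, Relation.ReflTransGen.refl, ?_⟩
    have hz : ∀ J ∈ Icc 1 k, S a J - S b J = 0 := by
      rw [← Finset.sum_eq_zero_iff]
      omega
    have hSeq : ∀ J, J ≤ k → S a J = S b J := by
      intro J hJ
      rcases Nat.eq_zero_or_pos J with rfl | hJ1
      · simp [S_def]
      · have h1 := hz J (mem_Icc.mpr ⟨hJ1, hJ⟩)
        have h2 := hdom J hJ1 hJ
        omega
    intro t h1 h2
    have e1 := S_top a h1
    have e2 := S_top b h1
    have e3 := hSeq t h2
    have e4 := hSeq (t-1) (by omega)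
    omega
  | succ N ih =>
    intro a ha hdom hM
    by_cases hEq : ∀ t, 1 ≤ t → t ≤ k → a t = b t
    · exact ⟨a, Relation.ReflTransGen.refl, hEq⟩
    push_neg at hEq
    obtain ⟨t0, ht01, ht0k, ht0ne⟩ := hEq
    have hex1 : ∃ t, 1 ≤ t ∧ t ≤ k ∧ a t ≠ b t := ⟨t0, ht01, ht0k, ht0ne⟩
    classical
    set i := Nat.find hex1 with hidef
    obtain ⟨hi1, hik, hine⟩ : 1 ≤ i ∧ i ≤ k ∧ a i ≠ b i := Nat.find_spec hex1
    have himin : ∀ t, 1 ≤ t → t < i → a t = b t := by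
      intro t h1 h2
      by_contra hne
      exact Nat.find_min hex1 h2 ⟨h1, by omega, hne⟩
    have hSprev : S a (i-1) = S b (i-1) := by
      apply Finset.sum_congr rfl
      intro t ht; rw [mem_Icc] at ht
      exact himin t ht.1 (by omega)
    have hSi_a := S_top a hi1
    have hSi_b := S_top b hi1
    have hbi : b i < a i := by
      have := hdom i hi1 hik
      omega
    have hex2 : ∃ t, i < t ∧ t ≤ k ∧ a t < b t := by
      by_contra hno
      push_neg at hno
      have hlt : ∑ t ∈ Icc 1 k, b t < ∑ t ∈ Icc 1 k, a t := by
        apply Finset.sum_lt_sum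
        · intro t ht; rw [mem_Icc] at ht
          rcases lt_trichotomy t i with h|h|h
          · exact le_of_eq (himin t ht.1 h).symm
          · subst h; exact le_of_lt hbi
          · exact hno t h ht.2
        · exact ⟨i, mem_Icc.mpr ⟨hi1, hik⟩, hbi⟩
      rw [ha.2.2, hb.2.2] at hlt
      omega
    set m := Nat.find hex2 with hmdef
    obtain ⟨him, hmk, ham⟩ : i < m ∧ m ≤ k ∧ a m < b m := Nat.find_spec hex2
    have hmmin : ∀ t, i < t → t < m → b t ≤ a t := by
      intro t h1 h2
      by_contra hc
      exact Nat.find_min hex2 h2 ⟨h1, by omega, by omega⟩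
    have hbmbi : b m ≤ b i := hb.2.1 i m hi1 (le_of_lt him) hmk
    have hgap : a m + 2 ≤ a i := by omega
    have hstrict : ∀ J, i ≤ J → J < m → S b J < S a J := by
      intro J hiJ hJm
      have hsa := S_split a hiJ
      have hsb := S_split b hiJ
      have hterm : ∑ t ∈ Ioc i J, b t ≤ ∑ t ∈ Ioc i J, a t := by
        apply Finset.sum_le_sum
        intro t ht; rw [mem_Ioc] at ht
        exact hmmin t ht.1 (by omega)
      omega
    -- i' : last index with value a i
    set P1 : ℕ → Prop := fun t => i ≤ t ∧ a t = a i with hP1def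
    set i' := Nat.findGreatest P1 k with hi'def
    have hi'spec : i ≤ i' ∧ a i' = a i := Nat.findGreatest_spec hik (show P1 i from ⟨le_refl i, rfl⟩)
    have hi'le : i' ≤ k := Nat.findGreatest_le k
    have hi'max : ∀ t, i' < t → t ≤ k → a t < a i := by
      intro t h1 h2
      have hne : ¬ P1 t := Nat.findGreatest_is_greatest h1 h2
      have hle : a t ≤ a i := ha.2.1 i t hi1 (by omega) h2
      have : ¬ (i ≤ t ∧ a t = a i) := hne
      omega
    -- j' : first index with value a m
    have hex3 : ∃ t, 1 ≤ t ∧ a t = a m := ⟨m, by omega, rfl⟩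
    set j' := Nat.find hex3 with hj'def
    obtain ⟨hj'1, haj'⟩ : 1 ≤ j' ∧ a j' = a m := Nat.find_spec hex3
    have hj'le : j' ≤ m := Nat.find_le ⟨by omega, rfl⟩
    have hj'min : ∀ t, 1 ≤ t → t < j' → a m < a t := by
      intro t h1 h2
      have hne : ¬ (1 ≤ t ∧ a t = a m) := Nat.find_min hex3 h2
      have hle : a m ≤ a t := ha.2.1 t m h1 (by omega) hmk
      omega
    have hij' : i' < j' := by
      by_contra hcon
      push_neg at hcon
      have := ha.2.1 j' i' hj'1 hcon hi'le
      omega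
    set a' : ℕ → ℕ := fun t => if t = i' then a i - 1 else if t = j' then a m + 1 else a t
      with ha'def
    have ha'i : a' i' = a i - 1 := by simp [ha'def]
    have ha'j : a' j' = a m + 1 := by
      have : j' ≠ i' := by omega
      simp [ha'def, this]
    have ha'o : ∀ t, t ≠ i' → t ≠ j' → a' t = a t := by
      intro t h1 h2; simp [ha'def, h1, h2]
    have hstep : StepTo k a a' := by
      refine ⟨i', j', by omega, hi'le, hj'1, by omega, by omega, ha.1, by omega, ?_, ?_, ha'o⟩
      · rw [ha'i, hi'spec.2]
      · rw [ha'j, haj']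
    have hparts' : ∀ t, 1 ≤ t → t ≤ k → 1 ≤ a' t := by
      intro t h1 h2
      by_cases hti : t = i'
      · rw [hti, ha'i]; omega
      by_cases htj : t = j'
      · rw [htj, ha'j]; omega
      · rw [ha'o t hti htj]; exact ha.1 t h1 h2
    have hmono' : ∀ s t, 1 ≤ s → s ≤ t → t ≤ k → a' t ≤ a' s := by
      intro s t hs hst htk
      rcases eq_or_lt_of_le hst with rfl | hlt
      · exact le_refl _
      by_cases hti : t = i'
      · subst hti
        have h1 : s ≠ i' := by omega
        have h2 : s ≠ j' := by omega
        rw [ha'i, ha'o s h1 h2]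
        have := ha.2.1 s i' hs (le_of_lt hlt) hi'le
        omega
      by_cases htj : t = j'
      · subst htj
        rw [ha'j]
        by_cases hsi : s = i'
        · rw [hsi, ha'i]; omega
        · have h2 : s ≠ j' := by omega
          rw [ha'o s hsi h2]
          have := hj'min s hs hlt
          omega
      · rw [ha'o t hti htj]
        by_cases hsi : s = i'
        · rw [hsi, ha'i]
          have := hi'max t (by omega) htk
          omega
        by_cases hsj : s = j'
        · rw [hsj, ha'j]
          have := ha.2.1 j' t hj'1 (by omega) htk
          omega
        · rw [ha'o s hsi hsj]
          exact ha.2.1 s t hs hst htk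
    have hiI' : i' ∈ Icc 1 k := mem_Icc.mpr ⟨by omega, hi'le⟩
    have hjI' : j' ∈ Icc 1 k := mem_Icc.mpr ⟨hj'1, by omega⟩
    have hij'ne : i' ≠ j' := by omega
    have hsum' : ∑ t ∈ Icc 1 k, a' t = n := by
      rw [ssum_split k i' j' hiI' hjI' hij'ne a', ha'i, ha'j]
      have he : ∑ t ∈ ((Icc 1 k).erase i').erase j', a' t
          = ∑ t ∈ ((Icc 1 k).erase i').erase j', a t := by
        apply Finset.sum_congr rfl
        intro t ht
        exact ha'o t (Finset.ne_of_mem_erase (Finset.mem_of_mem_erase ht))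
          (Finset.ne_of_mem_erase ht)
      rw [he]
      have h0 := ssum_split k i' j' hiI' hjI' hij'ne a
      have h1 := ha.2.2
      have h2 := hi'spec.2
      omega
    have hS'lt : ∀ J, J < i' → S a' J = S a J := by
      intro J hJ
      apply Finset.sum_congr rfl
      intro t ht; rw [mem_Icc] at ht
      exact ha'o t (by omega) (by omega)
    have hS'mid : ∀ J, i' ≤ J → J < j' → S a' J + 1 = S a J := by
      intro J h1 h2
      have hiJ : i' ∈ Icc 1 J := mem_Icc.mpr ⟨by omega, h1⟩
      have e1 : S a' J = a' i' + ∑ t ∈ (Icc 1 J).erase i', a' t :=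
        (Finset.add_sum_erase _ _ hiJ).symm
      have e2 : S a J = a i' + ∑ t ∈ (Icc 1 J).erase i', a t :=
        (Finset.add_sum_erase _ _ hiJ).symm
      have he : ∑ t ∈ (Icc 1 J).erase i', a' t = ∑ t ∈ (Icc 1 J).erase i', a t := by
        apply Finset.sum_congr rfl
        intro t ht
        have h3 := Finset.ne_of_mem_erase ht
        have h4 := Finset.mem_of_mem_erase ht
        rw [mem_Icc] at h4
        exact ha'o t h3 (by omega)
      rw [e1, e2, he, ha'i]
      have h2' := hi'spec.2
      omega
    have hS'ge : ∀ J, j' ≤ J → S a' J = S a J := by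
      intro J hJ
      have hiJ : i' ∈ Icc 1 J := mem_Icc.mpr ⟨by omega, by omega⟩
      have hjJ : j' ∈ Icc 1 J := mem_Icc.mpr ⟨hj'1, hJ⟩
      rw [S_def, S_def, ssum_split J i' j' hiJ hjJ hij'ne a',
        ssum_split J i' j' hiJ hjJ hij'ne a, ha'i, ha'j]
      have he : ∑ t ∈ ((Icc 1 J).erase i').erase j', a' t
          = ∑ t ∈ ((Icc 1 J).erase i').erase j', a t := by
        apply Finset.sum_congr rfl
        intro t ht
        exact ha'o t (Finset.ne_of_mem_erase (Finset.mem_of_mem_erase ht))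
          (Finset.ne_of_mem_erase ht)
      rw [he]
      have h2' := hi'spec.2
      have h3' := haj'
      omega
    have hdom' : ∀ J, 1 ≤ J → J ≤ k → S b J ≤ S a' J := by
      intro J h1 h2
      rcases lt_or_ge J i' with h | h
      · rw [hS'lt J h]; exact hdom J h1 h2
      rcases lt_or_ge J j' with h' | h'
      · have e := hS'mid J h h'
        have s := hstrict J (by omega) (by omega)
        omega
      · rw [hS'ge J h']; exact hdom J h1 h2
    have hMlt : ∑ J ∈ Icc 1 k, (S a' J - S b J) < ∑ J ∈ Icc 1 k, (S a J - S b J) := by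
      apply Finset.sum_lt_sum
      · intro J hJ; rw [mem_Icc] at hJ
        rcases lt_or_ge J i' with h | h
        · rw [hS'lt J h]
        rcases lt_or_ge J j' with h' | h'
        · have e := hS'mid J h h'; omega
        · rw [hS'ge J h']
      · refine ⟨i', hiI', ?_⟩
        have e := hS'mid i' (le_refl _) hij'
        have s := hstrict i' (by omega) (by omega)
        omega
    obtain ⟨c, hchain, hcb⟩ := ih a' ⟨hparts', hmono', hsum'⟩ hdom' (by omega)
    exact ⟨c, Relation.ReflTransGen.head hstep hchain, hcb⟩

/-- A mixture of Gibbs partitions is balance-averse if every mixed weight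
sequence `(W_s(ϑ))` is log-convex, and balance-seeking if every mixed weight
sequence is log-concave. -/
theorem mixture_gibbs_balancedness
    {Θ : Type*} [MeasurableSpace Θ] (ν : Measure Θ)
    (V : Θ → ℝ) (W : Θ → ℕ → ℝ)
    (hV : ∀ ϑ, 0 ≤ V ϑ) (hWnn : ∀ ϑ, ∀ s, 1 ≤ s → 0 ≤ W ϑ s)
    (hVm : Measurable V) (hWm : ∀ s, Measurable fun ϑ => W ϑ s)
    (n k : ℕ) (hn : 1 ≤ n) (hk : 1 ≤ k) (hkn : k ≤ n)
    (a b : ℕ → ℕ) (ha : IsIntegerPartition n k a) (hb : IsIntegerPartition n k b)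
    (hab : MoreBalanced k a b) :
    ((∀ ϑ, ∀ s : ℕ, 2 ≤ s → (W ϑ s) ^ 2 ≤ W ϑ (s - 1) * W ϑ (s + 1)) →
      ∫⁻ ϑ, ENNReal.ofReal (V ϑ * ∏ j ∈ Finset.Icc 1 k, W ϑ (b j)) ∂ν ≤
        ∫⁻ ϑ, ENNReal.ofReal (V ϑ * ∏ j ∈ Finset.Icc 1 k, W ϑ (a j)) ∂ν) ∧
    ((∀ ϑ, (∀ s : ℕ, 2 ≤ s → W ϑ (s - 1) * W ϑ (s + 1) ≤ (W ϑ s) ^ 2) ∧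
        NoInternalZeros (W ϑ)) →
      ∫⁻ ϑ, ENNReal.ofReal (V ϑ * ∏ j ∈ Finset.Icc 1 k, W ϑ (a j)) ∂ν ≤
        ∫⁻ ϑ, ENNReal.ofReal (V ϑ * ∏ j ∈ Finset.Icc 1 k, W ϑ (b j)) ∂ν) := by
  classical
  obtain ⟨c, hchain, hcb⟩ := exists_chain n k b hb
    (∑ J ∈ Finset.Icc 1 k, (S a J - S b J)) a ha
    (fun J h1 h2 => hab.1 J h1 h2) (le_refl _)
  have hprodcb : ∀ (f : ℕ → ℝ),
      ∏ j ∈ Finset.Icc 1 k, f (c j) = ∏ j ∈ Finset.Icc 1 k, f (b j) := by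
    intro f
    apply Finset.prod_congr rfl
    intro t ht
    rw [Finset.mem_Icc] at ht
    rw [hcb t ht.1 ht.2]
  constructor
  · intro hlc
    apply lintegral_mono
    intro ϑ
    apply ENNReal.ofReal_le_ofReal
    apply mul_le_mul_of_nonneg_left _ (hV ϑ)
    rw [← hprodcb (W ϑ)]
    exact chain_prod_le (W ϑ) (hWnn ϑ) (convex_transfer (W ϑ) (hWnn ϑ) (hlc ϑ)) hchain
  · intro hlc
    apply lintegral_mono
    intro ϑ
    apply ENNReal.ofReal_le_ofReal
    apply mul_le_mul_of_nonneg_left _ (hV ϑ)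
    rw [← hprodcb (W ϑ)]
    exact chain_prod_ge (W ϑ) (hWnn ϑ)
      (concave_transfer (W ϑ) (hWnn ϑ) (hlc ϑ).1 (hlc ϑ).2) hchain
end

section
/- Let μ = (μ_s)_{s≥1} be a probability mass function on the positive integers (μ_s ≥ 0, ∑_{s≥1} μ_s = 1) with μ_s > 0 for all s, and suppose there exist real constants a, b such that log(s!·μ_s) = a·s + b for every s ≥ 1 (equivalently, the sequence (s!·μ_s) is both log-convex and log-concave with full support). Then μ is a zero-truncated Poisson distribution: there exists λ > 0 (namely λ = e^a) such that μ_s = λ^s/(s!·(e^λ − 1)) for all s ≥ 1. Consequently the zero-truncated Poisson distributions are exactly the probability mass functions on the positive integers for which the ESC model is balance-neutral. -/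
/-- If `μ` is a p.m.f. on the positive integers with full support such that
`log(s!·μ_s) = a·s + b` for all `s ≥ 1`, then `μ` is the zero-truncated
Poisson distribution with parameter `λ = e^a`:
`μ_s = λ^s / (s!·(e^λ − 1))` for all `s ≥ 1`. -/
theorem loglinear_is_truncated_poisson
    (μ : ℕ → ℝ) (hpos : ∀ s : ℕ, 1 ≤ s → 0 < μ s)
    (hnn : ∀ s : ℕ, 1 ≤ s → 0 ≤ μ s)
    (hsum : ∑' s : ℕ, μ (s + 1) = 1)
    (a b : ℝ)
    (hlin : ∀ s : ℕ, 1 ≤ s →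
      Real.log ((Nat.factorial s : ℝ) * μ s) = a * (s : ℝ) + b) :
    ∃ lam : ℝ, lam = Real.exp a ∧ 0 < lam ∧
      ∀ s : ℕ, 1 ≤ s →
        μ s = lam ^ s / ((Nat.factorial s : ℝ) * (Real.exp lam - 1)) := by
  refine ⟨Real.exp a, rfl, Real.exp_pos a, ?_⟩
  set lam := Real.exp a with hlam
  have hlampos : 0 < lam := Real.exp_pos a
  have key : ∀ s : ℕ, 1 ≤ s →
      μ s = lam ^ s * Real.exp b / (Nat.factorial s : ℝ) := by
    intro s hs
    have hfac : (0:ℝ) < (Nat.factorial s : ℝ) := by positivity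
    have h1 : (0:ℝ) < (Nat.factorial s : ℝ) * μ s := mul_pos hfac (hpos s hs)
    have h2 : (Nat.factorial s : ℝ) * μ s = Real.exp (a * s + b) := by
      rw [← hlin s hs, Real.exp_log h1]
    have h3 : Real.exp (a * (s:ℝ) + b) = lam ^ s * Real.exp b := by
      rw [Real.exp_add, mul_comm a (s:ℝ), Real.exp_nat_mul, hlam]
    rw [h3] at h2
    field_simp at h2 ⊢
    linarith [h2]
  -- exp lam = ∑' n, lam ^ n / n!
  have hexp : Real.exp lam = ∑' n : ℕ, lam ^ n / (Nat.factorial n : ℝ) := by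
    rw [Real.exp_eq_exp_ℝ, NormedSpace.exp_eq_tsum_div]
  have hsummable : Summable fun n : ℕ => lam ^ n / (Nat.factorial n : ℝ) :=
    Real.summable_pow_div_factorial lam
  have hsplit : Real.exp lam =
      1 + ∑' n : ℕ, lam ^ (n + 1) / (Nat.factorial (n + 1) : ℝ) := by
    rw [hexp, Summable.tsum_eq_zero_add hsummable]
    simp
  have hEb : Real.exp b * (Real.exp lam - 1) = 1 := by
    have : (∑' s : ℕ, μ (s + 1)) =
        Real.exp b * ∑' n : ℕ, lam ^ (n + 1) / (Nat.factorial (n + 1) : ℝ) := by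
      rw [← tsum_mul_left]
      refine tsum_congr fun n => ?_
      rw [key (n + 1) (Nat.le_add_left 1 n)]
      ring
    rw [this] at hsum
    rw [hsplit]
    linarith [hsum]
  have hne : Real.exp lam - 1 ≠ 0 := by
    have : (1:ℝ) < Real.exp lam := by
      rw [← Real.exp_zero]
      exact Real.exp_lt_exp.mpr hlampos
    linarith
  intro s hs
  have hfac : ((Nat.factorial s : ℝ)) ≠ 0 := by positivity
  rw [key s hs]
  have hEb' : Real.exp b = 1 / (Real.exp lam - 1) := by
    field_simp at hEb ⊢
    linarith [hEb]
  rw [hEb']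
  field_simp
end

section
/- Let W = (W_s)_{s≥1} be a sequence of strictly positive reals with W_1 = 1 and B-sequence B_s(W) = −s(log W_{s+1} − 2 log W_s + log W_{s−1}), s ≥ 2. Then: (i) B_s(W) ≤ 0 for all s ≥ 2 if and only if for every n, every 1 ≤ k ≤ n, and all integer partitions 𝐧 ≺ 𝐧' of n into k parts, ∏_{j=1}^k W_{n_j} ≥ ∏_{j=1}^k W_{n'_j} (balance-averse); (ii) B_s(W) ≥ 0 for all s ≥ 2 if and only if the reverse product inequality holds for all such 𝐧 ≺ 𝐧' (balance-seeking); (iii) B_s(W) = 0 for all s ≥ 2 if and only if ∏_{j=1}^k W_{n_j} = ∏_{j=1}^k W_{n'_j} for all such 𝐧 ≺ 𝐧' (balance-neutral). -/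
/-- The B-sequence of a weight sequence `W`:
`B_s(W) = −s(log W_{s+1} − 2 log W_s + log W_{s−1})` for `s ≥ 2`. -/
noncomputable def Bseq (W : ℕ → ℝ) (s : ℕ) : ℝ :=
  -(s : ℝ) * (Real.log (W (s + 1)) - 2 * Real.log (W s) + Real.log (W (s - 1)))

open Finset

open Finset

private lemma sum_swap_two {M : Type*} [AddCommMonoid M] (g : ℕ → M) (a c : ℕ → ℕ)
    (i l : ℕ) (hil : i ≠ l) (hc : ∀ j, j ≠ i → j ≠ l → c j = a j)
    (S : Finset ℕ) (hi : i ∈ S) (hl : l ∈ S) :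
    (∑ j ∈ S, g (c j)) + (g (a i) + g (a l)) = (∑ j ∈ S, g (a j)) + (g (c i) + g (c l)) := by
  have hl' : l ∈ S.erase i := Finset.mem_erase.mpr ⟨Ne.symm hil, hl⟩
  rw [← Finset.sum_erase_add S (fun j => g (c j)) hi,
      ← Finset.sum_erase_add S (fun j => g (a j)) hi,
      ← Finset.sum_erase_add _ (fun j => g (c j)) hl',
      ← Finset.sum_erase_add _ (fun j => g (a j)) hl']
  have h : ∑ j ∈ (S.erase i).erase l, g (c j) = ∑ j ∈ (S.erase i).erase l, g (a j) := by
    refine Finset.sum_congr rfl fun j hj => ?_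
    simp only [Finset.mem_erase] at hj
    rw [hc j hj.2.1 hj.1]
  rw [h]; abel

private lemma sum_swap_one {M : Type*} [AddCommMonoid M] (g : ℕ → M) (a c : ℕ → ℕ)
    (i : ℕ) (S : Finset ℕ) (hi : i ∈ S) (hc : ∀ j ∈ S, j ≠ i → c j = a j) :
    (∑ j ∈ S, g (c j)) + g (a i) = (∑ j ∈ S, g (a j)) + g (c i) := by
  rw [← Finset.sum_erase_add S (fun j => g (c j)) hi,
      ← Finset.sum_erase_add S (fun j => g (a j)) hi]
  have h : ∑ j ∈ S.erase i, g (c j) = ∑ j ∈ S.erase i, g (a j) := by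
    refine Finset.sum_congr rfl fun j hj => ?_
    have h2 := Finset.mem_erase.mp hj
    rw [hc j h2.2 h2.1]
  rw [h]; abel

private lemma karamata (f : ℕ → ℝ)
    (hs : ∀ z y : ℕ, 1 ≤ y → y + 1 ≤ z → f z + f (y + 1) ≤ f (z + 1) + f y)
    (k : ℕ) :
    ∀ m : ℕ, ∀ a b : ℕ → ℕ,
      (∀ j, 1 ≤ j → j ≤ k → 1 ≤ a j) →
      (∀ j, 1 ≤ j → j ≤ k → 1 ≤ b j) →
      (∀ i j, 1 ≤ i → i ≤ j → j ≤ k → b j ≤ b i) →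
      (∀ J, 1 ≤ J → J ≤ k → ∑ j ∈ Icc 1 J, b j ≤ ∑ j ∈ Icc 1 J, a j) →
      (∑ j ∈ Icc 1 k, a j = ∑ j ∈ Icc 1 k, b j) →
      (∑ j ∈ Icc 1 k, (max (a j) (b j) - min (a j) (b j)) ≤ m) →
      ∑ j ∈ Icc 1 k, f (b j) ≤ ∑ j ∈ Icc 1 k, f (a j) := by
  intro m
  induction m with
  | zero =>
    intro a b ha hb hbm hdom hsum hm
    have hall : ∀ j ∈ Icc 1 k, b j = a j := by
      intro j hj
      have h0 : max (a j) (b j) - min (a j) (b j) = 0 :=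
        Nat.eq_zero_of_le_zero (le_trans (Finset.single_le_sum
          (f := fun j => max (a j) (b j) - min (a j) (b j)) (fun _ _ => Nat.zero_le _) hj) hm)
      omega
    exact le_of_eq (Finset.sum_congr rfl fun j hj => by rw [hall j hj])
  | succ m ih =>
    intro a b ha hb hbm hdom hsum hm
    classical
    by_cases hab : ∀ j ∈ Icc 1 k, a j = b j
    · exact le_of_eq (Finset.sum_congr rfl fun j hj => by rw [hab j hj]).symm
    push_neg at hab
    have hPex : ∃ j, j ∈ Icc 1 k ∧ a j ≠ b j := hab
    obtain ⟨i, ⟨hiIcc, hine⟩, himin0⟩ :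
        ∃ i, (i ∈ Icc 1 k ∧ a i ≠ b i) ∧ ∀ j, j < i → ¬(j ∈ Icc 1 k ∧ a j ≠ b j) :=
      ⟨Nat.find hPex, Nat.find_spec hPex, fun j hj => Nat.find_min hPex hj⟩
    have himin : ∀ j, j < i → j ∈ Icc 1 k → a j = b j := by
      intro j hj hjIcc
      by_contra hne
      exact himin0 j hj ⟨hjIcc, hne⟩
    rw [Finset.mem_Icc] at hiIcc
    obtain ⟨hi1, hik⟩ := hiIcc
    have hbia : b i < a i := by
      have h1 := hdom i hi1 hik
      have hiI : i ∈ Icc 1 i := Finset.mem_Icc.mpr ⟨hi1, le_rfl⟩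
      have e1 := Finset.sum_erase_add (Icc 1 i) b hiI
      have e2 := Finset.sum_erase_add (Icc 1 i) a hiI
      have e3 : ∑ j ∈ (Icc 1 i).erase i, a j = ∑ j ∈ (Icc 1 i).erase i, b j := by
        refine Finset.sum_congr rfl fun j hj => ?_
        rw [Finset.mem_erase, Finset.mem_Icc] at hj
        exact himin j (lt_of_le_of_ne hj.2.2 hj.1) (Finset.mem_Icc.mpr ⟨hj.2.1, le_trans hj.2.2 hik⟩)
      have hle : b i ≤ a i := by omega
      exact lt_of_le_of_ne hle (Ne.symm hine)
    have hQex : ∃ j, j ∈ Icc 1 k ∧ a j < b j := by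
      by_contra hcon
      push_neg at hcon
      have hlt : ∑ j ∈ Icc 1 k, b j < ∑ j ∈ Icc 1 k, a j :=
        Finset.sum_lt_sum (fun j hj => hcon j hj) ⟨i, Finset.mem_Icc.mpr ⟨hi1, hik⟩, hbia⟩
      omega
    obtain ⟨l, ⟨hlIcc, hlab⟩, hlmin0⟩ :
        ∃ l, (l ∈ Icc 1 k ∧ a l < b l) ∧ ∀ j, j < l → ¬(j ∈ Icc 1 k ∧ a j < b j) :=
      ⟨Nat.find hQex, Nat.find_spec hQex, fun j hj => Nat.find_min hQex hj⟩
    have hlmin : ∀ j, j < l → j ∈ Icc 1 k → b j ≤ a j := by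
      intro j hj hjI
      by_contra h
      exact hlmin0 j hj ⟨hjI, by omega⟩
    rw [Finset.mem_Icc] at hlIcc
    obtain ⟨hl1, hlk⟩ := hlIcc
    have hil : i < l := by
      rcases lt_trichotomy i l with h | h | h
      · exact h
      · subst h; omega
      · have := himin l h (Finset.mem_Icc.mpr ⟨hl1, hlk⟩); omega
    have hbl_bi : b l ≤ b i := hbm i l hi1 (le_of_lt hil) hlk
    have hal1 : 1 ≤ a l := ha l hl1 hlk
    have hbi1 : 1 ≤ b i := hb i hi1 hik
    have hgap : a l + 2 ≤ a i := by omega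
    obtain ⟨z, hz⟩ : ∃ z, a i = z + 1 := ⟨a i - 1, by omega⟩
    set c : ℕ → ℕ := fun j => if j = i then z else if j = l then a l + 1 else a j with hcdef
    have hilne : i ≠ l := Nat.ne_of_lt hil
    have hci : c i = z := by simp [hcdef]
    have hcl : c l = a l + 1 := by simp [hcdef, hilne.symm]
    have hcother : ∀ j, j ≠ i → j ≠ l → c j = a j := by
      intro j h1 h2; simp [hcdef, h1, h2]
    have hiK : i ∈ Icc 1 k := Finset.mem_Icc.mpr ⟨hi1, hik⟩
    have hlK : l ∈ Icc 1 k := Finset.mem_Icc.mpr ⟨hl1, hlk⟩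
    have hc1 : ∀ j, 1 ≤ j → j ≤ k → 1 ≤ c j := by
      intro j hj1 hjk
      by_cases h1 : j = i
      · subst h1; rw [hci]; omega
      by_cases h2 : j = l
      · subst h2; rw [hcl]; omega
      rw [hcother j h1 h2]; exact ha j hj1 hjk
    have hsum2 := sum_swap_two id a c i l hilne hcother (Icc 1 k) hiK hlK
    simp only [id] at hsum2
    rw [hci, hcl] at hsum2
    have hcsum : ∑ j ∈ Icc 1 k, c j = ∑ j ∈ Icc 1 k, b j := by omega
    have hcdom : ∀ J, 1 ≤ J → J ≤ k → ∑ j ∈ Icc 1 J, b j ≤ ∑ j ∈ Icc 1 J, c j := by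
      intro J hJ1 hJk
      by_cases hJi : J < i
      · have heq : ∑ j ∈ Icc 1 J, c j = ∑ j ∈ Icc 1 J, a j := by
          refine Finset.sum_congr rfl fun j hj => ?_
          rw [Finset.mem_Icc] at hj
          exact hcother j (by omega) (by omega)
        rw [heq]; exact hdom J hJ1 hJk
      push_neg at hJi
      by_cases hJl : J < l
      · have hstrict : ∑ j ∈ Icc 1 J, b j < ∑ j ∈ Icc 1 J, a j := by
          refine Finset.sum_lt_sum (fun j hj => ?_) ⟨i, Finset.mem_Icc.mpr ⟨hi1, hJi⟩, hbia⟩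
          rw [Finset.mem_Icc] at hj
          exact hlmin j (by omega) (Finset.mem_Icc.mpr ⟨hj.1, le_trans hj.2 hJk⟩)
        have h1 := sum_swap_one id a c i (Icc 1 J) (Finset.mem_Icc.mpr ⟨hi1, hJi⟩)
          (fun j hj hji => hcother j hji (by rw [Finset.mem_Icc] at hj; omega))
        simp only [id] at h1
        rw [hci] at h1
        omega
      push_neg at hJl
      have h2 := sum_swap_two id a c i l hilne hcother (Icc 1 J)
        (Finset.mem_Icc.mpr ⟨hi1, by omega⟩) (Finset.mem_Icc.mpr ⟨hl1, hJl⟩)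
      simp only [id] at h2
      rw [hci, hcl] at h2
      have h3 := hdom J hJ1 hJk
      omega
    have hcm : ∑ j ∈ Icc 1 k, (max (c j) (b j) - min (c j) (b j)) ≤ m := by
      have hlt : ∑ j ∈ Icc 1 k, (max (c j) (b j) - min (c j) (b j))
          < ∑ j ∈ Icc 1 k, (max (a j) (b j) - min (a j) (b j)) := by
        refine Finset.sum_lt_sum (fun j hj => ?_) ⟨i, hiK, ?_⟩
        · by_cases h1 : j = i
          · subst h1; rw [hci]; omega
          by_cases h2 : j = l
          · subst h2; rw [hcl]; omega
          rw [hcother j h1 h2]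
        · rw [hci]; omega
      omega
    have hfc : ∑ j ∈ Icc 1 k, f (c j) ≤ ∑ j ∈ Icc 1 k, f (a j) := by
      have h3 := sum_swap_two f a c i l hilne hcother (Icc 1 k) hiK hlK
      rw [hci, hcl] at h3
      have h4 := hs z (a l) hal1 (by omega)
      rw [← hz] at h4
      linarith
    exact le_trans (ih c b hc1 hb hbm hcdom hcsum hcm) hfc

private lemma main_dir (f : ℕ → ℝ)
    (hconv : ∀ t : ℕ, 1 ≤ t → f (t + 1) - f t ≤ f (t + 2) - f (t + 1))
    {n k : ℕ} (a b : ℕ → ℕ)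
    (hpa : IsIntegerPartition n k a) (hpb : IsIntegerPartition n k b)
    (hdom : ∀ J, 1 ≤ J → J ≤ k → ∑ j ∈ Icc 1 J, b j ≤ ∑ j ∈ Icc 1 J, a j) :
    ∑ j ∈ Icc 1 k, f (b j) ≤ ∑ j ∈ Icc 1 k, f (a j) := by
  have hmono : ∀ y z : ℕ, 1 ≤ y → y ≤ z → f (y + 1) - f y ≤ f (z + 1) - f z := by
    intro y z hy hyz
    induction z, hyz using Nat.le_induction with
    | base => exact le_rfl
    | succ z hz ih => exact le_trans ih (hconv z (le_trans hy hz))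
  have hs : ∀ z y : ℕ, 1 ≤ y → y + 1 ≤ z → f z + f (y + 1) ≤ f (z + 1) + f y := by
    intro z y hy hyz
    have := hmono y z hy (by omega)
    linarith
  exact karamata f hs k (∑ j ∈ Icc 1 k, (max (a j) (b j) - min (a j) (b j))) a b
    hpa.1 hpb.1 hpb.2.1 hdom (hpa.2.2.trans hpb.2.2.symm) le_rfl

/-- For a strictly positive weight sequence `W` with `W_1 = 1`, the sign of
the B-sequence characterizes the balancedness of the Gibbs partition:
`B ≤ 0` iff balance-averse, `B ≥ 0` iff balance-seeking, `B = 0` iff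
balance-neutral. -/
theorem Bseq_sign_characterizes_balancedness
    (W : ℕ → ℝ) (hW : ∀ s, 1 ≤ s → 0 < W s) (hW1 : W 1 = 1) :
    ((∀ s : ℕ, 2 ≤ s → Bseq W s ≤ 0) ↔
      (∀ n k : ℕ, 1 ≤ n → 1 ≤ k → k ≤ n →
        ∀ a b : ℕ → ℕ, IsIntegerPartition n k a → IsIntegerPartition n k b →
          MoreBalanced k a b →
          ∏ j ∈ Finset.Icc 1 k, W (b j) ≤ ∏ j ∈ Finset.Icc 1 k, W (a j))) ∧
    ((∀ s : ℕ, 2 ≤ s → 0 ≤ Bseq W s) ↔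
      (∀ n k : ℕ, 1 ≤ n → 1 ≤ k → k ≤ n →
        ∀ a b : ℕ → ℕ, IsIntegerPartition n k a → IsIntegerPartition n k b →
          MoreBalanced k a b →
          ∏ j ∈ Finset.Icc 1 k, W (a j) ≤ ∏ j ∈ Finset.Icc 1 k, W (b j))) ∧
    ((∀ s : ℕ, 2 ≤ s → Bseq W s = 0) ↔
      (∀ n k : ℕ, 1 ≤ n → 1 ≤ k → k ≤ n →
        ∀ a b : ℕ → ℕ, IsIntegerPartition n k a → IsIntegerPartition n k b →
          MoreBalanced k a b →
          ∏ j ∈ Finset.Icc 1 k, W (a j) = ∏ j ∈ Finset.Icc 1 k, W (b j))) := by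
  have hIcc2 : Finset.Icc 1 2 = ({1, 2} : Finset ℕ) := by decide
  have hIcc1 : Finset.Icc 1 1 = ({1} : Finset ℕ) := by decide
  have h12 : (1 : ℕ) ≠ 2 := by norm_num
  -- part 1
  have part1 : (∀ s : ℕ, 2 ≤ s → Bseq W s ≤ 0) ↔
      (∀ n k : ℕ, 1 ≤ n → 1 ≤ k → k ≤ n →
        ∀ a b : ℕ → ℕ, IsIntegerPartition n k a → IsIntegerPartition n k b →
          MoreBalanced k a b →
          ∏ j ∈ Finset.Icc 1 k, W (b j) ≤ ∏ j ∈ Finset.Icc 1 k, W (a j)) := by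
    constructor
    · intro hB n k hn hk hkn a b hpa hpb hmb
      have hconv : ∀ t : ℕ, 1 ≤ t →
          Real.log (W (t + 1)) - Real.log (W t)
            ≤ Real.log (W (t + 2)) - Real.log (W (t + 1)) := by
        intro t ht
        have h := hB (t + 1) (by omega)
        have e : Bseq W (t + 1) = -(((t : ℝ) + 1)) *
            (Real.log (W (t + 2)) - 2 * Real.log (W (t + 1)) + Real.log (W t)) := by
          have e1 : t + 1 + 1 = t + 2 := by omega
          have e2 : t + 1 - 1 = t := by omega
          simp only [Bseq, e1, e2]
          push_cast
          ring
        rw [e] at h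
        nlinarith [h, sq_nonneg ((t : ℝ) + 1)]
      have hsum := main_dir (fun t => Real.log (W t)) hconv a b hpa hpb hmb.1
      have hbpos : ∀ j ∈ Finset.Icc 1 k, 0 < W (b j) := by
        intro j hj; rw [Finset.mem_Icc] at hj; exact hW _ (hpb.1 j hj.1 hj.2)
      have hapos : ∀ j ∈ Finset.Icc 1 k, 0 < W (a j) := by
        intro j hj; rw [Finset.mem_Icc] at hj; exact hW _ (hpa.1 j hj.1 hj.2)
      rw [← Real.log_le_log_iff (Finset.prod_pos hbpos) (Finset.prod_pos hapos),
        Real.log_prod (fun j hj => (hbpos j hj).ne'),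
        Real.log_prod (fun j hj => (hapos j hj).ne')]
      exact hsum
    · intro h s hs2
      have hp := h (2 * s) 2 (by omega) (by omega) (by omega)
        (fun j => if j = 1 then s + 1 else s - 1) (fun _ => s) ?_ ?_ ?_
      · rw [hIcc2, Finset.prod_pair h12, Finset.prod_pair h12] at hp
        norm_num at hp
        have h1pos : 0 < W s := hW s (by omega)
        have h2pos : 0 < W (s + 1) := hW _ (by omega)
        have h3pos : 0 < W (s - 1) := hW _ (by omega)
        have hl := Real.log_le_log (by positivity) hp
        rw [Real.log_mul h1pos.ne' h1pos.ne', Real.log_mul h2pos.ne' h3pos.ne'] at hl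
        have hX : 0 ≤ Real.log (W (s + 1)) - 2 * Real.log (W s) + Real.log (W (s - 1)) := by
          linarith
        simp only [Bseq, neg_mul]
        exact neg_nonpos.mpr (mul_nonneg (Nat.cast_nonneg s) hX)
      · refine ⟨?_, ?_, ?_⟩
        · intro j h1 h2; dsimp only; split <;> omega
        · intro i j h1 hij h2; dsimp only
          have h1' : 1 ≤ j := le_trans h1 hij
          interval_cases j <;> interval_cases i <;> norm_num <;> omega
        · rw [hIcc2, Finset.sum_pair h12]; norm_num; omega
      · refine ⟨fun j _ _ => by dsimp only; omega, fun _ _ _ _ _ => le_rfl, ?_⟩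
        rw [hIcc2, Finset.sum_pair h12]; omega
      · constructor
        · intro J hJ1 hJ2
          interval_cases J
          · rw [hIcc1, Finset.sum_singleton, Finset.sum_singleton]; norm_num
          · rw [hIcc2, Finset.sum_pair h12, Finset.sum_pair h12]; norm_num; omega
        · exact ⟨1, le_rfl, one_le_two, by norm_num⟩
  -- part 2
  have part2 : (∀ s : ℕ, 2 ≤ s → 0 ≤ Bseq W s) ↔
      (∀ n k : ℕ, 1 ≤ n → 1 ≤ k → k ≤ n →
        ∀ a b : ℕ → ℕ, IsIntegerPartition n k a → IsIntegerPartition n k b →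
          MoreBalanced k a b →
          ∏ j ∈ Finset.Icc 1 k, W (a j) ≤ ∏ j ∈ Finset.Icc 1 k, W (b j)) := by
    constructor
    · intro hB n k hn hk hkn a b hpa hpb hmb
      have hconv : ∀ t : ℕ, 1 ≤ t →
          (fun t => -Real.log (W t)) (t + 1) - (fun t => -Real.log (W t)) t
            ≤ (fun t => -Real.log (W t)) (t + 2) - (fun t => -Real.log (W t)) (t + 1) := by
        intro t ht
        have h := hB (t + 1) (by omega)
        have e : Bseq W (t + 1) = -(((t : ℝ) + 1)) *
            (Real.log (W (t + 2)) - 2 * Real.log (W (t + 1)) + Real.log (W t)) := by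
          have e1 : t + 1 + 1 = t + 2 := by omega
          have e2 : t + 1 - 1 = t := by omega
          simp only [Bseq, e1, e2]
          push_cast
          ring
        rw [e] at h
        dsimp only
        nlinarith [h, sq_nonneg ((t : ℝ) + 1)]
      have hsum := main_dir (fun t => -Real.log (W t)) hconv a b hpa hpb hmb.1
      simp only [Finset.sum_neg_distrib] at hsum
      have hsum' : ∑ j ∈ Finset.Icc 1 k, Real.log (W (a j))
          ≤ ∑ j ∈ Finset.Icc 1 k, Real.log (W (b j)) := by linarith
      have hbpos : ∀ j ∈ Finset.Icc 1 k, 0 < W (b j) := by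
        intro j hj; rw [Finset.mem_Icc] at hj; exact hW _ (hpb.1 j hj.1 hj.2)
      have hapos : ∀ j ∈ Finset.Icc 1 k, 0 < W (a j) := by
        intro j hj; rw [Finset.mem_Icc] at hj; exact hW _ (hpa.1 j hj.1 hj.2)
      rw [← Real.log_le_log_iff (Finset.prod_pos hapos) (Finset.prod_pos hbpos),
        Real.log_prod (fun j hj => (hapos j hj).ne'),
        Real.log_prod (fun j hj => (hbpos j hj).ne')]
      exact hsum'
    · intro h s hs2
      have hp := h (2 * s) 2 (by omega) (by omega) (by omega)
        (fun j => if j = 1 then s + 1 else s - 1) (fun _ => s) ?_ ?_ ?_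
      · rw [hIcc2, Finset.prod_pair h12, Finset.prod_pair h12] at hp
        norm_num at hp
        have h1pos : 0 < W s := hW s (by omega)
        have h2pos : 0 < W (s + 1) := hW _ (by omega)
        have h3pos : 0 < W (s - 1) := hW _ (by omega)
        have hl := Real.log_le_log (by positivity) hp
        rw [Real.log_mul h2pos.ne' h3pos.ne', Real.log_mul h1pos.ne' h1pos.ne'] at hl
        have hX : Real.log (W (s + 1)) - 2 * Real.log (W s) + Real.log (W (s - 1)) ≤ 0 := by
          linarith
        simp only [Bseq, neg_mul]
        exact neg_nonneg.mpr (mul_nonpos_of_nonneg_of_nonpos (Nat.cast_nonneg s) hX)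
      · refine ⟨?_, ?_, ?_⟩
        · intro j h1 h2; dsimp only; split <;> omega
        · intro i j h1 hij h2; dsimp only
          have h1' : 1 ≤ j := le_trans h1 hij
          interval_cases j <;> interval_cases i <;> norm_num <;> omega
        · rw [hIcc2, Finset.sum_pair h12]; norm_num; omega
      · refine ⟨fun j _ _ => by dsimp only; omega, fun _ _ _ _ _ => le_rfl, ?_⟩
        rw [hIcc2, Finset.sum_pair h12]; omega
      · constructor
        · intro J hJ1 hJ2
          interval_cases J
          · rw [hIcc1, Finset.sum_singleton, Finset.sum_singleton]; norm_num
          · rw [hIcc2, Finset.sum_pair h12, Finset.sum_pair h12]; norm_num; omega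
        · exact ⟨1, le_rfl, one_le_two, by norm_num⟩
  refine ⟨part1, part2, ?_⟩
  constructor
  · intro h0 n k hn hk hkn a b hpa hpb hmb
    exact le_antisymm
      (part2.mp (fun s hs => (h0 s hs).ge) n k hn hk hkn a b hpa hpb hmb)
      (part1.mp (fun s hs => (h0 s hs).le) n k hn hk hkn a b hpa hpb hmb)
  · intro h s hs
    have h1 := part1.mpr
      (fun n k hn hk hkn a b hpa hpb hmb => (h n k hn hk hkn a b hpa hpb hmb).ge) s hs
    have h2 := part2.mpr
      (fun n k hn hk hkn a b hpa hpb hmb => (h n k hn hk hkn a b hpa hpb hmb).le) s hs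
    linarith
end

section
/- For σ < 1, the Ewens–Pitman weights W_s(σ) = Γ(s−σ)/Γ(1−σ) have B-sequence B_s(σ) = −s·(log(s−σ) − log(s−1−σ)) for s ≥ 2. For every integer s ≥ 2 and all reals σ < σ' < 1, one has B_s(σ') < B_s(σ) < 0; that is, σ ↦ B_s(σ) is strictly decreasing on (−∞,1) and strictly negative there. (Hence among Ewens–Pitman two-parameter models, a larger discount parameter σ yields a strictly more unbalanced random partition.) -/
/-- The Ewens–Pitman weights `W_s(σ) = Γ(s−σ)/Γ(1−σ)` (for `σ < 1`) have
B-sequence `B_s(σ) = −s(log(s−σ) − log(s−1−σ))`, and for every `s ≥ 2` the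
map `σ ↦ B_s(σ)` is strictly decreasing and strictly negative on `(−∞, 1)`:
for `σ < σ' < 1`, `B_s(σ') < B_s(σ) < 0`. -/
theorem ewens_pitman_Bseq_decreasing_neg :
    (∀ σ : ℝ, σ < 1 → ∀ s : ℕ, 2 ≤ s →
      Bseq (fun t => Real.Gamma ((t : ℝ) - σ) / Real.Gamma (1 - σ)) s =
        -(s : ℝ) * (Real.log ((s : ℝ) - σ) - Real.log ((s : ℝ) - 1 - σ))) ∧
    (∀ s : ℕ, 2 ≤ s → ∀ σ σ' : ℝ, σ < σ' → σ' < 1 →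
      -(s : ℝ) * (Real.log ((s : ℝ) - σ') - Real.log ((s : ℝ) - 1 - σ')) <
        -(s : ℝ) * (Real.log ((s : ℝ) - σ) - Real.log ((s : ℝ) - 1 - σ)) ∧
      -(s : ℝ) * (Real.log ((s : ℝ) - σ) - Real.log ((s : ℝ) - 1 - σ)) < 0) := by
  constructor
  · intro σ hσ s hs
    have hs2 : (2 : ℝ) ≤ (s : ℝ) := by exact_mod_cast hs
    have hc : Real.Gamma (1 - σ) ≠ 0 := (Real.Gamma_pos_of_pos (by linarith)).ne'
    have h1 : (0 : ℝ) < (s : ℝ) - 1 - σ := by linarith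
    have h2 : (0 : ℝ) < (s : ℝ) - σ := by linarith
    have hΓ1 : Real.Gamma ((s : ℝ) - 1 - σ) ≠ 0 := (Real.Gamma_pos_of_pos h1).ne'
    have hΓ2 : Real.Gamma ((s : ℝ) - σ) ≠ 0 := (Real.Gamma_pos_of_pos h2).ne'
    have hΓ3 : Real.Gamma ((s : ℝ) + 1 - σ) ≠ 0 :=
      (Real.Gamma_pos_of_pos (by linarith)).ne'
    have hcast : (((s - 1 : ℕ)) : ℝ) = (s : ℝ) - 1 := by
      have : 1 ≤ s := le_trans (by norm_num) hs
      push_cast [Nat.cast_sub this]; ring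
    have e1 : (s : ℝ) + 1 - σ = ((s : ℝ) - σ) + 1 := by ring
    have e2 : (s : ℝ) - σ = ((s : ℝ) - 1 - σ) + 1 := by ring
    have g1 : Real.Gamma ((s : ℝ) + 1 - σ) = ((s : ℝ) - σ) * Real.Gamma ((s : ℝ) - σ) := by
      rw [e1, Real.Gamma_add_one h2.ne']
    have g2 : Real.Gamma ((s : ℝ) - σ) = ((s : ℝ) - 1 - σ) * Real.Gamma ((s : ℝ) - 1 - σ) := by
      rw [e2, Real.Gamma_add_one h1.ne']
    simp only [Bseq]
    push_cast
    rw [hcast]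
    rw [Real.log_div hΓ3 hc, Real.log_div hΓ2 hc, Real.log_div hΓ1 hc,
      g1, g2, Real.log_mul h2.ne' (mul_ne_zero h1.ne' hΓ1),
      Real.log_mul h1.ne' hΓ1]
    ring
  · intro s hs σ σ' hσσ' hσ'
    have hs2 : (2 : ℝ) ≤ (s : ℝ) := by exact_mod_cast hs
    have h1 : (0 : ℝ) < (s : ℝ) - 1 - σ' := by linarith
    have h2 : (0 : ℝ) < (s : ℝ) - σ' := by linarith
    have h3 : (0 : ℝ) < (s : ℝ) - 1 - σ := by linarith
    have h4 : (0 : ℝ) < (s : ℝ) - σ := by linarith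
    have hspos : (0 : ℝ) < (s : ℝ) := by linarith
    constructor
    · have key : Real.log (((s : ℝ) - σ) * ((s : ℝ) - 1 - σ')) <
          Real.log (((s : ℝ) - σ') * ((s : ℝ) - 1 - σ)) := by
        apply Real.log_lt_log (by positivity)
        nlinarith
      rw [Real.log_mul h4.ne' h1.ne', Real.log_mul h2.ne' h3.ne'] at key
      nlinarith
    · have key : Real.log ((s : ℝ) - 1 - σ) < Real.log ((s : ℝ) - σ) :=
        Real.log_lt_log h3 (by linarith)
      nlinarith
end

section
/- Let r > 0 and p ∈ (0,1), and let μ be the zero-truncated negative binomial distribution μ_s = C(s+r−1, s)·(1−p)^r p^s/(1−(1−p)^r) for s ≥ 1, where C(s+r−1,s) = Γ(s+r)/(Γ(r)·s!). Then: (i) the reallocation weight satisfies (s+1)·μ_{s+1}/μ_s = (s+r)·p for every s ≥ 1, a strictly increasing linear function of s (the 'rich-get-richer' rule); (ii) the sequence (s!·μ_s)_{s≥1} is strictly log-convex: (s!μ_s)² < (s−1)!μ_{s−1}·(s+1)!μ_{s+1} for all s ≥ 2, so the corresponding ESC model is balance-averse. -/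
/-! Writing `a s = s! μ_s`, the recursion `Γ(x + 1) = x Γ(x)` gives `a (s+1) = (s + r) p · a s`,
so the ratios of consecutive terms of the positive sequence `a` increase strictly; this is
exactly strict log-convexity. -/

open Real Nat

theorem sq_lt_mul_of_succ_eq_mul {a w : ℕ → ℝ} {n : ℕ} (ha₀ : 0 < a n) (ha₁ : 0 < a (n + 1))
    (hw : w n < w (n + 1)) (h₁ : a (n + 1) = w n * a n) (h₂ : a (n + 2) = w (n + 1) * a (n + 1)) :
    a (n + 1) ^ 2 < a n * a (n + 2) :=
  calc a (n + 1) ^ 2 = w n * (a n * a (n + 1)) := by rw [sq, h₁]; ring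
    _ < w (n + 1) * (a n * a (n + 1)) := by gcongr
    _ = a n * a (n + 2) := by rw [h₂]; ring

theorem succ_mul_div_eq_factorial_mul_div (μ : ℕ → ℝ) (s : ℕ) :
    ((s : ℝ) + 1) * μ (s + 1) / μ s = ((s + 1)! : ℝ) * μ (s + 1) / ((s ! : ℝ) * μ s) := by
  rw [← mul_div_mul_left _ (μ s) (by positivity : (s ! : ℝ) ≠ 0), factorial_succ]
  push_cast
  ring

noncomputable def truncNegBinomial (r p : ℝ) (s : ℕ) : ℝ :=
  Gamma ((s : ℝ) + r) / (Gamma r * (s ! : ℝ)) * ((1 - p) ^ r * p ^ s) / (1 - (1 - p) ^ r)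

section TruncatedNegBinomial

variable {r p : ℝ}

theorem truncNegBinomial_pos (hr : 0 < r) (hp : 0 < p) (hp1 : p < 1) (s : ℕ) :
    0 < truncNegBinomial r p s := by
  have hq : 0 < 1 - p := by linarith
  have hD : 0 < 1 - (1 - p) ^ r := sub_pos.2 (rpow_lt_one hq.le (by linarith) hr)
  have := Gamma_pos_of_pos hr
  have := Gamma_pos_of_pos (by positivity : 0 < (s : ℝ) + r)
  unfold truncNegBinomial
  positivity

theorem factorial_mul_truncNegBinomial_succ (hr : 0 < r) (s : ℕ) :
    ((s + 1)! : ℝ) * truncNegBinomial r p (s + 1) =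
      ((s : ℝ) + r) * p * ((s ! : ℝ) * truncNegBinomial r p s) := by
  have hGamma : Gamma (((s + 1 : ℕ) : ℝ) + r) = ((s : ℝ) + r) * Gamma ((s : ℝ) + r) := by
    rw [cast_succ, add_right_comm, Gamma_add_one (by positivity)]
  have : ((s + 1)! : ℝ) ≠ 0 := by positivity
  have : (s ! : ℝ) ≠ 0 := by positivity
  rw [truncNegBinomial, truncNegBinomial, hGamma]
  field_simp
  ring

end TruncatedNegBinomial

/-- For the zero-truncated negative binomial cluster-size distribution
`μ_s = C(s+r−1,s)(1−p)^r p^s/(1−(1−p)^r)` with `C(s+r−1,s) = Γ(s+r)/(Γ(r)s!)`: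
(i) the reallocation weight `(s+1)μ_{s+1}/μ_s = (s+r)p` is a strictly
increasing linear function of `s` ("rich-get-richer");
(ii) the sequence `(s!·μ_s)` is strictly log-convex, so the ESC model is
balance-averse. -/
theorem truncated_negBinomial_balance_averse
    (r p : ℝ) (hr : 0 < r) (hp : 0 < p) (hp1 : p < 1)
    (μ : ℕ → ℝ)
    (hμ : ∀ s : ℕ, 1 ≤ s → μ s =
      Real.Gamma ((s : ℝ) + r) / (Real.Gamma r * (Nat.factorial s : ℝ)) *
        ((1 - p) ^ r * p ^ s) / (1 - (1 - p) ^ r)) :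
    (∀ s : ℕ, 1 ≤ s →
      ((s : ℝ) + 1) * μ (s + 1) / μ s = ((s : ℝ) + r) * p) ∧
    (∀ s t : ℕ, 1 ≤ s → s < t → ((s : ℝ) + r) * p < ((t : ℝ) + r) * p) ∧
    (∀ s : ℕ, 2 ≤ s →
      ((Nat.factorial s : ℝ) * μ s) ^ 2 <
        ((Nat.factorial (s - 1) : ℝ) * μ (s - 1)) *
          ((Nat.factorial (s + 1) : ℝ) * μ (s + 1))) := by
  set a : ℕ → ℝ := fun s ↦ (s ! : ℝ) * μ s
  have ha_pos {s : ℕ} (hs : 1 ≤ s) : 0 < a s := by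
    simp only [a, hμ s hs]
    exact mul_pos (by positivity) (truncNegBinomial_pos hr hp hp1 s)
  have ha_succ {s : ℕ} (hs : 1 ≤ s) : a (s + 1) = ((s : ℝ) + r) * p * a s := by
    simp only [a, hμ s hs, hμ (s + 1) (by omega)]
    exact factorial_mul_truncNegBinomial_succ hr s
  have hweight_lt {s t : ℕ} (hst : s < t) : ((s : ℝ) + r) * p < ((t : ℝ) + r) * p := by
    gcongr
  refine ⟨fun s hs ↦ ?_, fun s t _ hst ↦ hweight_lt hst, fun s hs ↦ ?_⟩
  · rw [succ_mul_div_eq_factorial_mul_div]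
    exact (div_eq_iff (ha_pos hs).ne').2 (ha_succ hs)
  · obtain ⟨n, rfl⟩ : ∃ n, s = n + 1 := ⟨s - 1, by omega⟩
    exact sq_lt_mul_of_succ_eq_mul (w := fun s ↦ ((s : ℝ) + r) * p) (ha_pos (by omega))
      (ha_pos (by omega)) (hweight_lt (lt_add_one n)) (ha_succ (by omega)) (ha_succ (by omega))
end
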